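/- arXiv:hep-th/9411141 — 5 statements merged into one kernel-verified Lean document; each statement's English description precedes it below -/
import Mathlib

section
/- Let 1 ≤ k ≤ n and let T¹,…,Tⁿ be elements of ⋀^k V ⊗ ⋀^k V. Then the family (T^l) satisfies S T^l = T^l for all l together with the cyclic equations Σ over the cyclic permutations (l,m,r) ↦ (l,m,r), (m,r,l), (r,l,m) of [(b*_l c*_m + b*_m c*_l) T^r] = 0 for all l, m, r ∈ {1,…,n}, if and only if there exists B′ ∈ ⋀^{k−1} V ⊗ ⋀^k V such that T^l = b*_l B′ + c*_l S B′ for all l = 1,…,n. -/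
open scoped BigOperators TensorProduct

noncomputable section

/-- The exterior algebra `Λ` of `V = ℝ^n`. -/
abbrev ExtAlg (n : ℕ) : Type := ExteriorAlgebra ℝ (Fin n → ℝ)

/-- The Hilbert-space model `H := Λ ⊗ Λ` (as an `ℝ`-vector space). -/
abbrev Hspace (n : ℕ) : Type := TensorProduct ℝ (ExtAlg n) (ExtAlg n)

/-- The creation operator `b*_l = (e_l ∧ ·) ⊗ 1` on `H`. -/
def bstar (n : ℕ) (l : Fin n) : Hspace n →ₗ[ℝ] Hspace n :=
  TensorProduct.map
    (LinearMap.mulLeft ℝ (ExteriorAlgebra.ι ℝ (Pi.single l 1 : Fin n → ℝ)))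
    LinearMap.id

/-- The creation operator `c*_l = 1 ⊗ (e_l ∧ ·)` on `H`. -/
def cstar (n : ℕ) (l : Fin n) : Hspace n →ₗ[ℝ] Hspace n :=
  TensorProduct.map LinearMap.id
    (LinearMap.mulLeft ℝ (ExteriorAlgebra.ι ℝ (Pi.single l 1 : Fin n → ℝ)))

/-- The flip `S(x ⊗ y) = y ⊗ x` on `H`. -/
def Sflip (n : ℕ) : Hspace n →ₗ[ℝ] Hspace n :=
  (TensorProduct.comm ℝ (ExtAlg n) (ExtAlg n)).toLinearMap

/-- The subspace `⋀^{k₁} V ⊗ ⋀^{k₂} V` of `H = Λ ⊗ Λ`. -/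
def extTensorSub (n k₁ k₂ : ℕ) : Submodule ℝ (Hspace n) :=
  LinearMap.range (TensorProduct.map
    (⋀[ℝ]^k₁ (Fin n → ℝ)).subtype (⋀[ℝ]^k₂ (Fin n → ℝ)).subtype)

/-!
Let `b_l`, `c_l` be the contractions adjoint to `b*_l`, `c*_l`, and let
`G = ∑_m b*_m c_m` and `G' = ∑_l c*_l b_l` (`bann`, `cann`, `moveToFirst`, `moveToSecond`
below), which move one degree from the second tensor factor to the first and back. Contracting the cyclic equations with `∑_m c_m` and applying `G^j` gives,
for some `W_j` of bidegree `(k + j, k - 1 - j)`,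
`c*_l G^{j+1} T^r + c*_r G^{j+1} T^l = (n - k + 2 + j) (b*_l G^j T^r + b*_r G^j T^l)
  + b*_r c*_l W_j + b*_l c*_r W_j`,
and contracting once more with `∑_l b_l` (where `∑_l b_l b*_l` counts the complementary degree)
yields
`(n - k + 2 + j) (n - k + 1 - j) G^j T^r = G' G^{j+1} T^r + b*_r X_j + c*_r Y_j`.
Now `G^j T^r` has first degree `k + j`, so it vanishes for `j = n - k + 1`, and the coefficient
on the left is nonzero for `j ≤ n - k`. Since `G'` maps `b*_r B + c*_r C` to a vector of the same
form, descending induction on `j` writes every `G^j T^r`, in particular `T^r`, as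
`b*_r B + c*_r C`. Projecting `B` and `C` to the right bidegrees and replacing `B` by
`(B + S C) / 2`, using `S T^r = T^r`, gives the potential. Conversely, such `T^r` satisfy the cyclic
equations because the `b*` anticommute, the `c*` anticommute, and `b*` and `c*` commute.
-/

namespace ExteriorAlgebra

variable {R M : Type*} [CommRing R] [AddCommGroup M] [Module R M]

theorem ι_mul_ι_mul_comm (v w : M) (x : ExteriorAlgebra R M) :
    ι R v * (ι R w * x) = -(ι R w * (ι R v * x)) := by
  rw [← mul_assoc, ← mul_assoc, eq_neg_of_add_eq_zero_left (ι_add_mul_swap v w), neg_mul]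

theorem ι_mul_mem (v : M) {p : ℕ} {x : ExteriorAlgebra R M} (hx : x ∈ ⋀[R]^p M) :
    ι R v * x ∈ ⋀[R]^(p + 1) M := by
  rw [exteriorPower, pow_succ']
  exact Submodule.mul_mem_mul (LinearMap.mem_range_self _ _) hx

theorem proj_succ_ι_mul (p : ℕ) (v : M) (x : ExteriorAlgebra R M) :
    GradedAlgebra.proj (fun i : ℕ => ⋀[R]^i M) (p + 1) (ι R v * x) =
      ι R v * GradedAlgebra.proj (fun i : ℕ => ⋀[R]^i M) p x := by
  have hv : ι R v ∈ ⋀[R]^1 M := by simp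
  simp only [GradedAlgebra.proj_apply]
  rw [DirectSum.coe_decompose_mul_of_left_mem_of_le (fun i : ℕ => ⋀[R]^i M) hv
    (Nat.le_add_left 1 p), Nat.add_sub_cancel]

variable {n : ℕ}

def wedgeSingle (l : Fin n) : ExteriorAlgebra R (Fin n → R) →ₗ[R] ExteriorAlgebra R (Fin n → R) :=
  LinearMap.mulLeft R (ι R (Pi.single l 1))

def contractSingle (l : Fin n) :
    ExteriorAlgebra R (Fin n → R) →ₗ[R] ExteriorAlgebra R (Fin n → R) :=
  CliffordAlgebra.contractLeft (LinearMap.proj l)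

theorem wedgeSingle_apply (l : Fin n) (x : ExteriorAlgebra R (Fin n → R)) :
    wedgeSingle l x = ι R (Pi.single l 1) * x := rfl

theorem contractSingle_ι_mul (l : Fin n) (v : Fin n → R) (x : ExteriorAlgebra R (Fin n → R)) :
    contractSingle l (ι R v * x) = v l • x - ι R v * contractSingle l x :=
  CliffordAlgebra.contractLeft_ι_mul _ _ _

theorem contractSingle_algebraMap (l : Fin n) (r : R) :
    contractSingle l (algebraMap R (ExteriorAlgebra R (Fin n → R)) r) = 0 :=
  CliffordAlgebra.contractLeft_algebraMap _ _ _

theorem wedgeSingle_wedgeSingle (l m : Fin n) (x : ExteriorAlgebra R (Fin n → R)) :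
    wedgeSingle l (wedgeSingle m x) = -wedgeSingle m (wedgeSingle l x) :=
  ι_mul_ι_mul_comm _ _ x

theorem contractSingle_wedgeSingle (l m : Fin n) (x : ExteriorAlgebra R (Fin n → R)) :
    contractSingle l (wedgeSingle m x) =
      (if l = m then x else 0) - wedgeSingle m (contractSingle l x) := by
  rw [wedgeSingle_apply, contractSingle_ι_mul, Pi.single_apply]
  split_ifs <;> simp [wedgeSingle_apply]

theorem wedgeSingle_mem (l : Fin n) {p : ℕ} {x : ExteriorAlgebra R (Fin n → R)}
    (hx : x ∈ ⋀[R]^p (Fin n → R)) : wedgeSingle l x ∈ ⋀[R]^(p + 1) (Fin n → R) :=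
  ι_mul_mem _ hx

theorem contractSingle_eq_zero_of_mem_zero (l : Fin n) {x : ExteriorAlgebra R (Fin n → R)}
    (hx : x ∈ ⋀[R]^0 (Fin n → R)) : contractSingle l x = 0 := by
  rw [exteriorPower, pow_zero] at hx
  obtain ⟨r, rfl⟩ := Submodule.mem_one.mp hx
  exact contractSingle_algebraMap l r

theorem contractSingle_mem (l : Fin n) {p : ℕ} {x : ExteriorAlgebra R (Fin n → R)}
    (hx : x ∈ ⋀[R]^p (Fin n → R)) : contractSingle l x ∈ ⋀[R]^(p - 1) (Fin n → R) := by
  induction hx using Submodule.pow_induction_on_left' with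
  | algebraMap r => simp [contractSingle_algebraMap]
  | add x y i _ _ hx hy => rw [map_add]; exact add_mem hx hy
  | mem_mul m hm i x hx ih =>
    obtain ⟨v, rfl⟩ := hm
    rw [contractSingle_ι_mul]
    refine sub_mem (Submodule.smul_mem _ _ (by simpa using hx)) ?_
    cases i with
    | zero => simp [contractSingle_eq_zero_of_mem_zero l hx]
    | succ i => simpa using ι_mul_mem v (by simpa using ih)

theorem sum_smul_ι_single (v : Fin n → R) :
    ∑ l, v l • ι R (Pi.single l 1 : Fin n → R) = ι R v := by
  simp_rw [← map_smul, ← map_sum, ← Pi.single_smul, smul_eq_mul, mul_one, Finset.univ_sum_single]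

theorem sum_wedgeSingle_contractSingle {p : ℕ} {x : ExteriorAlgebra R (Fin n → R)}
    (hx : x ∈ ⋀[R]^p (Fin n → R)) : ∑ l, wedgeSingle l (contractSingle l x) = p • x := by
  induction hx using Submodule.pow_induction_on_left' with
  | algebraMap r => simp [contractSingle_algebraMap]
  | add x y i _ _ hx hy => simp only [map_add, Finset.sum_add_distrib, hx, hy, smul_add]
  | mem_mul m hm i x hx ih =>
    obtain ⟨v, rfl⟩ := hm
    have h : ∀ l, wedgeSingle l (contractSingle l (ι R v * x)) =
        v l • ι R (Pi.single l 1) * x + ι R v * wedgeSingle l (contractSingle l x) := fun l => by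
      rw [contractSingle_ι_mul, map_sub, map_smul, wedgeSingle_apply, wedgeSingle_apply,
        ι_mul_ι_mul_comm, sub_neg_eq_add, smul_mul_assoc]
      rfl
    rw [Finset.sum_congr rfl fun l _ => h l, Finset.sum_add_distrib, ← Finset.sum_mul,
      sum_smul_ι_single, ← Finset.mul_sum, ih, mul_smul_comm, succ_nsmul']

theorem sum_contractSingle_wedgeSingle {p : ℕ} {x : ExteriorAlgebra R (Fin n → R)}
    (hx : x ∈ ⋀[R]^p (Fin n → R)) :
    ∑ l, contractSingle l (wedgeSingle l x) = ((n : R) - p) • x := by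
  simp only [contractSingle_wedgeSingle, if_pos, Finset.sum_sub_distrib,
    sum_wedgeSingle_contractSingle hx, Finset.sum_const, Finset.card_univ, Fintype.card_fin,
    sub_smul, Nat.cast_smul_eq_nsmul]

theorem exteriorPower_eq_bot_of_lt [Nontrivial R] {p : ℕ} (h : n < p) :
    ⋀[R]^p (Fin n → R) = ⊥ := by
  have : Subsingleton (⋀[R]^p (Fin n → R)) := by
    rw [← Module.finrank_eq_zero_iff_of_free R, exteriorPower.finrank_eq, Module.finrank_fin_fun]
    exact Nat.choose_eq_zero_of_lt h
  exact Submodule.eq_bot_of_subsingleton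

end ExteriorAlgebra

section

open ExteriorAlgebra

variable {n : ℕ}

def bann (n : ℕ) (l : Fin n) : Hspace n →ₗ[ℝ] Hspace n :=
  TensorProduct.map (contractSingle l) LinearMap.id

def cann (n : ℕ) (l : Fin n) : Hspace n →ₗ[ℝ] Hspace n :=
  TensorProduct.map LinearMap.id (contractSingle l)

section Relations

variable (l m : Fin n) (a b : ExtAlg n) (x : Hspace n)

@[simp] theorem bstar_tmul : bstar n l (a ⊗ₜ b) = wedgeSingle l a ⊗ₜ b := rfl
@[simp] theorem cstar_tmul : cstar n l (a ⊗ₜ b) = a ⊗ₜ wedgeSingle l b := rfl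
@[simp] theorem bann_tmul : bann n l (a ⊗ₜ b) = contractSingle l a ⊗ₜ b := rfl
@[simp] theorem cann_tmul : cann n l (a ⊗ₜ b) = a ⊗ₜ contractSingle l b := rfl
@[simp] theorem Sflip_tmul : Sflip n (a ⊗ₜ b) = b ⊗ₜ a := rfl

theorem bstar_cstar : bstar n l (cstar n m x) = cstar n m (bstar n l x) := by
  induction x using TensorProduct.induction_on <;> simp_all

theorem bann_cstar : bann n l (cstar n m x) = cstar n m (bann n l x) := by
  induction x using TensorProduct.induction_on <;> simp_all

theorem cann_bstar : cann n l (bstar n m x) = bstar n m (cann n l x) := by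
  induction x using TensorProduct.induction_on <;> simp_all

theorem bstar_bstar : bstar n l (bstar n m x) = -bstar n m (bstar n l x) := by
  induction x using TensorProduct.induction_on <;>
    simp_all [wedgeSingle_wedgeSingle l m, TensorProduct.neg_tmul, add_comm]

theorem cstar_cstar : cstar n l (cstar n m x) = -cstar n m (cstar n l x) := by
  induction x using TensorProduct.induction_on <;>
    simp_all [wedgeSingle_wedgeSingle l m, TensorProduct.tmul_neg, add_comm]

theorem bann_bstar :
    bann n l (bstar n m x) = (if l = m then x else 0) - bstar n m (bann n l x) := by
  induction x using TensorProduct.induction_on with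
  | zero => simp
  | tmul a b => simp [contractSingle_wedgeSingle, TensorProduct.sub_tmul, TensorProduct.ite_tmul]
  | add x y hx hy => simp only [map_add, hx, hy]; split_ifs <;> abel

theorem cann_cstar :
    cann n l (cstar n m x) = (if l = m then x else 0) - cstar n m (cann n l x) := by
  induction x using TensorProduct.induction_on with
  | zero => simp
  | tmul a b => simp [contractSingle_wedgeSingle, TensorProduct.tmul_sub, TensorProduct.tmul_ite]
  | add x y hx hy => simp only [map_add, hx, hy]; split_ifs <;> abel

theorem Sflip_Sflip : Sflip n (Sflip n x) = x := by
  induction x using TensorProduct.induction_on <;> simp_all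

theorem Sflip_bstar : Sflip n (bstar n l x) = cstar n l (Sflip n x) := by
  induction x using TensorProduct.induction_on <;> simp_all

theorem Sflip_cstar : Sflip n (cstar n l x) = bstar n l (Sflip n x) := by
  induction x using TensorProduct.induction_on <;> simp_all

end Relations

section Degree

variable {p q : ℕ}

theorem tmul_mem_extTensorSub {a b : ExtAlg n} (ha : a ∈ ⋀[ℝ]^p (Fin n → ℝ))
    (hb : b ∈ ⋀[ℝ]^q (Fin n → ℝ)) : a ⊗ₜ b ∈ extTensorSub n p q :=
  ⟨(⟨a, ha⟩ : ⋀[ℝ]^p (Fin n → ℝ)) ⊗ₜ (⟨b, hb⟩ : ⋀[ℝ]^q (Fin n → ℝ)), rfl⟩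

@[elab_as_elim]
theorem extTensorSub_induction {motive : (x : Hspace n) → x ∈ extTensorSub n p q → Prop}
    (zero : motive 0 (zero_mem _))
    (add : ∀ x y hx hy, motive x hx → motive y hy → motive (x + y) (add_mem hx hy))
    (tmul : ∀ a (ha : a ∈ ⋀[ℝ]^p (Fin n → ℝ)) b (hb : b ∈ ⋀[ℝ]^q (Fin n → ℝ)),
      motive (a ⊗ₜ b) (tmul_mem_extTensorSub ha hb))
    {x : Hspace n} (hx : x ∈ extTensorSub n p q) : motive x hx := by
  obtain ⟨y, rfl⟩ := hx
  induction y using TensorProduct.induction_on with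
  | zero => simpa using zero
  | tmul a b => exact tmul a.1 a.2 b.1 b.2
  | add y z hy hz => simpa using add _ _ _ _ hy hz

theorem map_mem_extTensorSub {p' q' : ℕ} {f g : ExtAlg n →ₗ[ℝ] ExtAlg n}
    (hf : ∀ a ∈ ⋀[ℝ]^p (Fin n → ℝ), f a ∈ ⋀[ℝ]^p' (Fin n → ℝ))
    (hg : ∀ b ∈ ⋀[ℝ]^q (Fin n → ℝ), g b ∈ ⋀[ℝ]^q' (Fin n → ℝ))
    {x : Hspace n} (hx : x ∈ extTensorSub n p q) :
    TensorProduct.map f g x ∈ extTensorSub n p' q' := by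
  induction hx using extTensorSub_induction with
  | zero => simp
  | add x y _ _ hx hy => rw [map_add]; exact add_mem hx hy
  | tmul a ha b hb => exact tmul_mem_extTensorSub (hf a ha) (hg b hb)

variable {x : Hspace n}

theorem bstar_mem (l : Fin n) (hx : x ∈ extTensorSub n p q) :
    bstar n l x ∈ extTensorSub n (p + 1) q :=
  map_mem_extTensorSub (fun _ => wedgeSingle_mem l) (fun _ => id) hx

theorem cstar_mem (l : Fin n) (hx : x ∈ extTensorSub n p q) :
    cstar n l x ∈ extTensorSub n p (q + 1) :=
  map_mem_extTensorSub (fun _ => id) (fun _ => wedgeSingle_mem l) hx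

theorem cann_mem (l : Fin n) (hx : x ∈ extTensorSub n p q) :
    cann n l x ∈ extTensorSub n p (q - 1) :=
  map_mem_extTensorSub (fun _ => id) (fun _ => contractSingle_mem l) hx

theorem Sflip_mem (hx : x ∈ extTensorSub n p q) : Sflip n x ∈ extTensorSub n q p := by
  induction hx using extTensorSub_induction with
  | zero => simp
  | add x y _ _ hx hy => rw [map_add]; exact add_mem hx hy
  | tmul a ha b hb => exact tmul_mem_extTensorSub hb ha

theorem eq_zero_of_mem_extTensorSub_of_lt (h : n < p) (hx : x ∈ extTensorSub n p q) : x = 0 := by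
  induction hx using extTensorSub_induction with
  | zero => rfl
  | add x y _ _ hx hy => rw [hx, hy, add_zero]
  | tmul a ha b hb =>
    rw [exteriorPower_eq_bot_of_lt h, Submodule.mem_bot] at ha
    rw [ha, TensorProduct.zero_tmul]

theorem sum_bann_bstar_of_mem (hx : x ∈ extTensorSub n p q) :
    ∑ l, bann n l (bstar n l x) = ((n : ℝ) - p) • x := by
  induction hx using extTensorSub_induction with
  | zero => simp
  | add x y _ _ hx hy => simp only [map_add, Finset.sum_add_distrib, hx, hy, smul_add]
  | tmul a ha b hb =>
    simp only [bstar_tmul, bann_tmul, ← TensorProduct.sum_tmul,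
      sum_contractSingle_wedgeSingle ha, TensorProduct.smul_tmul']

theorem sum_cann_cstar_of_mem (hx : x ∈ extTensorSub n p q) :
    ∑ l, cann n l (cstar n l x) = ((n : ℝ) - q) • x := by
  induction hx using extTensorSub_induction with
  | zero => simp
  | add x y _ _ hx hy => simp only [map_add, Finset.sum_add_distrib, hx, hy, smul_add]
  | tmul a ha b hb =>
    simp only [cstar_tmul, cann_tmul, ← TensorProduct.tmul_sum,
      sum_contractSingle_wedgeSingle hb, TensorProduct.tmul_smul]

end Degree

theorem sum_bann_bstar_family (Z : Fin n → Hspace n) (r : Fin n) :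
    ∑ l, bann n l (bstar n r (Z l)) = Z r - bstar n r (∑ l, bann n l (Z l)) := by
  simp [bann_bstar, Finset.sum_sub_distrib]

theorem sum_cann_cstar_family (Z : Fin n → Hspace n) (r : Fin n) :
    ∑ l, cann n l (cstar n r (Z l)) = Z r - cstar n r (∑ l, cann n l (Z l)) := by
  simp [cann_cstar, Finset.sum_sub_distrib]

def moveToFirst (n : ℕ) : Hspace n →ₗ[ℝ] Hspace n := ∑ m, bstar n m ∘ₗ cann n m

def moveToSecond (n : ℕ) : Hspace n →ₗ[ℝ] Hspace n := ∑ l, cstar n l ∘ₗ bann n l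

section Transfer

variable (l : Fin n) (x : Hspace n)

theorem moveToFirst_apply : moveToFirst n x = ∑ m, bstar n m (cann n m x) := by
  simp [moveToFirst]

theorem moveToSecond_apply : moveToSecond n x = ∑ m, cstar n m (bann n m x) := by
  simp [moveToSecond]

theorem sum_cann_bstar : ∑ m, cann n m (bstar n m x) = moveToFirst n x := by
  simp [moveToFirst_apply, cann_bstar]

theorem moveToFirst_bstar : moveToFirst n (bstar n l x) = -bstar n l (moveToFirst n x) := by
  simp [moveToFirst_apply, cann_bstar, bstar_bstar _ l]

theorem moveToFirst_cstar :
    moveToFirst n (cstar n l x) = bstar n l x - cstar n l (moveToFirst n x) := by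
  simp [moveToFirst_apply, cann_cstar, Finset.sum_sub_distrib, bstar_cstar, apply_ite]

theorem moveToSecond_cstar : moveToSecond n (cstar n l x) = -cstar n l (moveToSecond n x) := by
  simp [moveToSecond_apply, bann_cstar, cstar_cstar _ l]

theorem moveToSecond_bstar :
    moveToSecond n (bstar n l x) = cstar n l x - bstar n l (moveToSecond n x) := by
  simp [moveToSecond_apply, bann_bstar, Finset.sum_sub_distrib, bstar_cstar, apply_ite]

theorem moveToFirst_pow_succ_apply (j : ℕ) :
    (moveToFirst n ^ (j + 1)) x = moveToFirst n ((moveToFirst n ^ j) x) := by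
  rw [pow_succ', Module.End.mul_apply]

end Transfer

theorem moveToFirst_mem {p q : ℕ} {x : Hspace n} (hx : x ∈ extTensorSub n p q) :
    moveToFirst n x ∈ extTensorSub n (p + 1) (q - 1) := by
  rw [moveToFirst_apply]
  exact Submodule.sum_mem _ fun m _ => bstar_mem m (cann_mem m hx)

theorem moveToFirst_pow_mem {p q : ℕ} (j : ℕ) {x : Hspace n} (hx : x ∈ extTensorSub n p q) :
    (moveToFirst n ^ j) x ∈ extTensorSub n (p + j) (q - j) := by
  induction j with
  | zero => simpa using hx
  | succ j ih =>
    rw [moveToFirst_pow_succ_apply, ← add_assoc, Nat.sub_succ']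
    exact moveToFirst_mem ih

def bidegreeProj (n p q : ℕ) : Hspace n →ₗ[ℝ] Hspace n :=
  TensorProduct.map (GradedAlgebra.proj (fun i : ℕ => ⋀[ℝ]^i (Fin n → ℝ)) p)
    (GradedAlgebra.proj (fun i : ℕ => ⋀[ℝ]^i (Fin n → ℝ)) q)

section Projection

variable {p q : ℕ}

theorem bidegreeProj_mem (x : Hspace n) : bidegreeProj n p q x ∈ extTensorSub n p q := by
  induction x using TensorProduct.induction_on with
  | zero => simp
  | tmul a b => exact tmul_mem_extTensorSub (SetLike.coe_mem _) (SetLike.coe_mem _)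
  | add x y hx hy => rw [map_add]; exact add_mem hx hy

theorem bidegreeProj_of_mem {x : Hspace n} (hx : x ∈ extTensorSub n p q) :
    bidegreeProj n p q x = x := by
  induction hx using extTensorSub_induction with
  | zero => simp
  | add x y _ _ hx hy => rw [map_add, hx, hy]
  | tmul a ha b hb =>
    simp only [bidegreeProj, TensorProduct.map_tmul, GradedAlgebra.proj_apply,
      DirectSum.decompose_of_mem_same (fun i : ℕ => ⋀[ℝ]^i (Fin n → ℝ)) ha,
      DirectSum.decompose_of_mem_same (fun i : ℕ => ⋀[ℝ]^i (Fin n → ℝ)) hb]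

theorem bidegreeProj_bstar (l : Fin n) (x : Hspace n) :
    bidegreeProj n (p + 1) q (bstar n l x) = bstar n l (bidegreeProj n p q x) := by
  induction x using TensorProduct.induction_on with
  | zero => simp
  | tmul a b =>
    simp only [bidegreeProj, bstar_tmul, TensorProduct.map_tmul, wedgeSingle_apply,
      proj_succ_ι_mul]
  | add x y hx hy => simp only [map_add, hx, hy]

theorem bidegreeProj_cstar (l : Fin n) (x : Hspace n) :
    bidegreeProj n p (q + 1) (cstar n l x) = cstar n l (bidegreeProj n p q x) := by
  induction x using TensorProduct.induction_on with
  | zero => simp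
  | tmul a b =>
    simp only [bidegreeProj, cstar_tmul, TensorProduct.map_tmul, wedgeSingle_apply,
      proj_succ_ι_mul]
  | add x y hx hy => simp only [map_add, hx, hy]

end Projection

def cyclicSum (T : Fin n → Hspace n) (l m r : Fin n) : Hspace n :=
  (bstar n l (cstar n m (T r)) + bstar n m (cstar n l (T r))) +
    (bstar n m (cstar n r (T l)) + bstar n r (cstar n m (T l))) +
    (bstar n r (cstar n l (T m)) + bstar n l (cstar n r (T m)))

section Cyclic

variable {k : ℕ} {T : Fin n → Hspace n} (hT : ∀ l, T l ∈ extTensorSub n k k)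
  (hcyc : ∀ l m r, cyclicSum T l m r = 0)
include hT hcyc

theorem exists_cyclic_contraction :
    ∃ W ∈ extTensorSub n k (k - 1), ∀ l r,
      cstar n l (moveToFirst n (T r)) + cstar n r (moveToFirst n (T l)) =
        ((n : ℝ) - k + 2) • (bstar n l (T r) + bstar n r (T l)) +
          bstar n r (cstar n l W) + bstar n l (cstar n r W) := by
  set V := ∑ m, cann n m (T m)
  refine ⟨-V, neg_mem (Submodule.sum_mem _ fun m _ => cann_mem m (hT m)), fun l r => ?_⟩
  have hA : ∀ a b, ∑ m, cann n m (bstar n a (cstar n m (T b))) =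
      ((n : ℝ) - k) • bstar n a (T b) := fun a b => by
    simp only [cann_bstar, ← map_sum, sum_cann_cstar_of_mem (hT b), map_smul]
  have hB : ∀ a b, ∑ m, cann n m (bstar n m (cstar n a (T b))) =
      bstar n a (T b) - cstar n a (moveToFirst n (T b)) := fun a b => by
    rw [sum_cann_bstar, moveToFirst_cstar]
  have hC : ∀ a b, ∑ m, cann n m (bstar n a (cstar n b (T m))) =
      bstar n a (T b) - bstar n a (cstar n b V) := fun a b => by
    simp only [cann_bstar, ← map_sum, sum_cann_cstar_family, map_sub]; rfl
  have h : ∑ m, cann n m (cyclicSum T l m r) = 0 := by simp [hcyc]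
  simp only [cyclicSum, map_add, Finset.sum_add_distrib, hA, hB, hC] at h
  simp only [map_neg]
  linear_combination (norm := module) -h

theorem exists_cyclic_contraction_pow (j : ℕ) :
    ∃ W ∈ extTensorSub n (k + j) (k - 1 - j), ∀ l r,
      cstar n l ((moveToFirst n ^ (j + 1)) (T r)) + cstar n r ((moveToFirst n ^ (j + 1)) (T l)) =
        ((n : ℝ) - k + 2 + j) •
            (bstar n l ((moveToFirst n ^ j) (T r)) + bstar n r ((moveToFirst n ^ j) (T l))) +
          bstar n r (cstar n l W) + bstar n l (cstar n r W) := by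
  induction j with
  | zero => simpa using exists_cyclic_contraction hT hcyc
  | succ j ih =>
    obtain ⟨W, hW, hWeq⟩ := ih
    refine ⟨-moveToFirst n W, by simpa [Nat.sub_sub, add_assoc] using neg_mem (moveToFirst_mem hW),
      fun l r => ?_⟩
    have h := congrArg (moveToFirst n) (hWeq l r)
    simp only [map_add, map_smul, moveToFirst_cstar, moveToFirst_bstar, map_sub,
      ← moveToFirst_pow_succ_apply] at h
    rw [bstar_bstar l r] at h
    simp only [map_neg]
    push_cast
    linear_combination (norm := module) -h

theorem exists_moveToFirst_pow_recursion (j : ℕ) :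
    ∃ X Y, ∀ r, (((n : ℝ) - k + 2 + j) * ((n : ℝ) - k + 1 - j)) • (moveToFirst n ^ j) (T r) =
      moveToSecond n ((moveToFirst n ^ (j + 1)) (T r)) + bstar n r X + cstar n r Y := by
  obtain ⟨W, hW, hWeq⟩ := exists_cyclic_contraction_pow hT hcyc j
  set a : ℝ := (n : ℝ) - k + 2 + j
  set u : ℕ → Hspace n := fun i => ∑ l, bann n l ((moveToFirst n ^ i) (T l))
  refine ⟨a • u j + moveToSecond n W, u (j + 1) - ((n : ℝ) - k + 1 - j) • W, fun r => ?_⟩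
  have hnum : ∀ {y : Hspace n} {q : ℕ}, y ∈ extTensorSub n (k + j) q →
      ∑ l, bann n l (bstar n l y) = ((n : ℝ) - k - j) • y := fun hy => by
    rw [sum_bann_bstar_of_mem hy]; push_cast; ring_nf
  have h : ∑ l, bann n l (cstar n l ((moveToFirst n ^ (j + 1)) (T r)) +
      cstar n r ((moveToFirst n ^ (j + 1)) (T l))) = ∑ l, bann n l (a •
        (bstar n l ((moveToFirst n ^ j) (T r)) + bstar n r ((moveToFirst n ^ j) (T l))) +
          bstar n r (cstar n l W) + bstar n l (cstar n r W)) :=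
    Finset.sum_congr rfl fun l _ => by rw [hWeq]
  simp only [map_add, map_smul, Finset.sum_add_distrib, ← Finset.smul_sum, bann_cstar,
    ← map_sum, sum_bann_bstar_family, ← moveToSecond_apply,
    hnum (moveToFirst_pow_mem j (hT r)), hnum (cstar_mem r hW)] at h
  simp only [map_add, map_sub, map_smul]
  linear_combination (norm := module) -h

theorem exists_potential_moveToFirst_pow (hk : k ≤ n) {j : ℕ} (hj : j ≤ n - k + 1) :
    ∃ B C, ∀ r, (moveToFirst n ^ j) (T r) = bstar n r B + cstar n r C := by
  induction hj using Nat.decreasingInduction with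
  | self =>
    refine ⟨0, 0, fun r => ?_⟩
    simpa using eq_zero_of_mem_extTensorSub_of_lt (by omega) (moveToFirst_pow_mem _ (hT r))
  | of_succ j hj ih =>
    obtain ⟨B, C, hBC⟩ := ih
    obtain ⟨X, Y, hXY⟩ := exists_moveToFirst_pow_recursion hT hcyc j
    set κ : ℝ := ((n : ℝ) - k + 2 + j) * ((n : ℝ) - k + 1 - j)
    have hκ : κ ≠ 0 := by
      have : (j : ℝ) + k ≤ n := by exact_mod_cast (by omega : j + k ≤ n)
      exact mul_ne_zero (by linarith) (by linarith)
    refine ⟨κ⁻¹ • (X - moveToSecond n B), κ⁻¹ • (Y + B - moveToSecond n C), fun r => ?_⟩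
    have h := hXY r
    rw [hBC r, map_add, moveToSecond_bstar, moveToSecond_cstar] at h
    rw [← inv_smul_smul₀ hκ ((moveToFirst n ^ j) (T r)), h]
    simp only [map_smul, map_sub, map_add]
    module

theorem exists_potential (hk1 : 1 ≤ k) (hk2 : k ≤ n) :
    ∃ B ∈ extTensorSub n (k - 1) k, ∃ C ∈ extTensorSub n k (k - 1),
      ∀ r, T r = bstar n r B + cstar n r C := by
  obtain ⟨B, C, hBC⟩ := exists_potential_moveToFirst_pow hT hcyc hk2 (Nat.zero_le _)
  obtain ⟨k, rfl⟩ : ∃ k', k = k' + 1 := ⟨k - 1, by omega⟩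
  refine ⟨bidegreeProj n k (k + 1) B, bidegreeProj_mem B, bidegreeProj n (k + 1) k C,
    bidegreeProj_mem C, fun r => ?_⟩
  rw [← bidegreeProj_of_mem (hT r), ← bidegreeProj_bstar, ← bidegreeProj_cstar, ← map_add,
    ← hBC r, pow_zero, Module.End.one_apply]

end Cyclic

theorem exists_symm_potential {p q : ℕ} {T : Fin n → Hspace n} (hS : ∀ r, Sflip n (T r) = T r)
    {B C : Hspace n} (hB : B ∈ extTensorSub n p q) (hC : C ∈ extTensorSub n q p)
    (hBC : ∀ r, T r = bstar n r B + cstar n r C) :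
    ∃ B' ∈ extTensorSub n p q, ∀ r, T r = bstar n r B' + cstar n r (Sflip n B') := by
  refine ⟨(1 / 2 : ℝ) • (B + Sflip n C), Submodule.smul_mem _ _ (add_mem hB (Sflip_mem hC)),
    fun r => ?_⟩
  have hS' : T r = cstar n r (Sflip n B) + bstar n r (Sflip n C) := by
    rw [← hS r, hBC r, map_add, Sflip_bstar, Sflip_cstar]
  simp only [map_smul, map_add, Sflip_Sflip]
  linear_combination (norm := module) (1 / 2 : ℝ) • hBC r + (1 / 2 : ℝ) • hS'

theorem cyclicSum_eq_zero_of_potential {T : Fin n → Hspace n} {B C : Hspace n}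
    (hBC : ∀ r, T r = bstar n r B + cstar n r C) (l m r : Fin n) : cyclicSum T l m r = 0 := by
  simp only [cyclicSum, hBC, map_add, bstar_cstar _ _ (bstar n _ _), bstar_bstar l r,
    bstar_bstar m r, bstar_bstar m l, cstar_cstar l r, cstar_cstar m r, cstar_cstar m l, map_neg]
  module

theorem Sflip_bstar_add_cstar_Sflip (l : Fin n) (B : Hspace n) :
    Sflip n (bstar n l B + cstar n l (Sflip n B)) = bstar n l B + cstar n l (Sflip n B) := by
  rw [map_add, Sflip_bstar, Sflip_cstar, Sflip_Sflip, add_comm]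

end

theorem cyclic_equations_solution {n k : ℕ} (hk1 : 1 ≤ k) (hk2 : k ≤ n)
    (T : Fin n → Hspace n) (hmem : ∀ l, T l ∈ extTensorSub n k k) :
    ((∀ l, Sflip n (T l) = T l) ∧
      (∀ l m r : Fin n,
        (bstar n l (cstar n m (T r)) + bstar n m (cstar n l (T r))) +
          (bstar n m (cstar n r (T l)) + bstar n r (cstar n m (T l))) +
          (bstar n r (cstar n l (T m)) + bstar n l (cstar n r (T m))) = 0)) ↔
    ∃ B ∈ extTensorSub n (k - 1) k,
      ∀ l, T l = bstar n l B + cstar n l (Sflip n B) := by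
  constructor
  · rintro ⟨hS, hcyc⟩
    obtain ⟨B, hB, C, hC, hBC⟩ := exists_potential hmem hcyc hk1 hk2
    exact exists_symm_potential hS hB hC hBC
  · rintro ⟨B, -, hB⟩
    exact ⟨fun l => by rw [hB l, Sflip_bstar_add_cstar_Sflip],
      cyclicSum_eq_zero_of_potential hB⟩

end
end

section
/- For all indices l, m, r, s ∈ {1,…,n}, the following operator identity holds on H: (b*_l c*_m + b*_m c*_l)(b*_r c*_s + b*_s c*_r) + (b*_m c*_r + b*_r c*_m)(b*_l c*_s + b*_s c*_l) + (b*_r c*_l + b*_l c*_r)(b*_m c*_s + b*_s c*_m) = 0, i.e. the sum over cyclic permutations of (l,m,r) of (b*_l c*_m + b*_m c*_l)(b*_r c*_s + b*_s c*_r) vanishes identically. (Consequently the tensors T^{lm} := −(1/2k²)(b*_l c*_m + b*_m c*_l)T^{(1)} identically satisfy the cyclic equations Σ_{cyc(l,m,r)} (b*_l c*_m + b*_m c*_l) T^{rs} = 0 for any T^{(1)} ∈ H.) -/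
open scoped BigOperators TensorProduct

noncomputable section

/-! The `b*_l` anticommute among themselves, so do the `c*_l`, and every `b*` commutes with every
`c*`. Moving all `b*` to the left, the cyclic sum has twelve terms `b*_i b*_j c*_k c*_t`, and they
cancel in pairs that differ by swapping either the two `b*` or the two `c*`. -/

theorem mul_add_mul_cyclic_eq_zero {R ι : Type*} [Ring R] (b c : ι → R)
    (hb : ∀ i j, b i * b j = -(b j * b i)) (hc : ∀ i j, c i * c j = -(c j * c i))
    (hbc : ∀ i j, Commute (b i) (c j)) (l m r s : ι) :
    (b l * c m + b m * c l) * (b r * c s + b s * c r) +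
      (b m * c r + b r * c m) * (b l * c s + b s * c l) +
      (b r * c l + b l * c r) * (b m * c s + b s * c m) = 0 := by
  have hcb (i j : ι) (x : R) : c j * (b i * x) = b i * (c j * x) := by
    rw [← mul_assoc, ← mul_assoc, (hbc i j).eq]
  have hbb (i j : ι) (x : R) : b i * (b j * x) = -(b j * (b i * x)) := by
    rw [← mul_assoc, ← mul_assoc, hb, neg_mul]
  simp only [add_mul, mul_add, mul_assoc, hcb]
  rw [hbb r l, hbb r m, hbb m l, hc r l, hc m l, hc r m]
  simp only [mul_neg]
  abel

theorem ExteriorAlgebra.mulLeft_ι_mul_mulLeft_ι {R M : Type*} [CommRing R] [AddCommGroup M]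
    [Module R M] (v w : M) :
    LinearMap.mulLeft R (ι R v) * LinearMap.mulLeft R (ι R w) =
      -(LinearMap.mulLeft R (ι R w) * LinearMap.mulLeft R (ι R v)) := by
  refine LinearMap.ext fun x => ?_
  simp only [Module.End.mul_apply, LinearMap.neg_apply, LinearMap.mulLeft_apply, ← mul_assoc,
    ← neg_mul, eq_neg_of_add_eq_zero_left (ι_add_mul_swap v w)]

theorem bstar_mul_bstar {n : ℕ} (i j : Fin n) :
    bstar n i * bstar n j = -(bstar n j * bstar n i) := by
  simp only [bstar, ← LinearMap.rTensor_def]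
  rw [← LinearMap.rTensor_mul, ExteriorAlgebra.mulLeft_ι_mul_mulLeft_ι, LinearMap.rTensor_neg,
    LinearMap.rTensor_mul]

theorem cstar_mul_cstar {n : ℕ} (i j : Fin n) :
    cstar n i * cstar n j = -(cstar n j * cstar n i) := by
  simp only [cstar, ← LinearMap.lTensor_def]
  rw [← LinearMap.lTensor_mul, ExteriorAlgebra.mulLeft_ι_mul_mulLeft_ι, LinearMap.lTensor_neg,
    LinearMap.lTensor_mul]

theorem commute_bstar_cstar {n : ℕ} (i j : Fin n) : Commute (bstar n i) (cstar n j) := by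
  simp only [Commute, SemiconjBy, bstar, cstar, ← LinearMap.rTensor_def,
    ← LinearMap.lTensor_def, Module.End.mul_eq_comp, LinearMap.rTensor_comp_lTensor,
    LinearMap.lTensor_comp_rTensor]

theorem cyclic_operator_identity {n : ℕ} (l m r s : Fin n) (h : Hspace n) :
    (bstar n l (cstar n m (bstar n r (cstar n s h) + bstar n s (cstar n r h))) +
        bstar n m (cstar n l (bstar n r (cstar n s h) + bstar n s (cstar n r h)))) +
      (bstar n m (cstar n r (bstar n l (cstar n s h) + bstar n s (cstar n l h))) +
        bstar n r (cstar n m (bstar n l (cstar n s h) + bstar n s (cstar n l h)))) +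
      (bstar n r (cstar n l (bstar n m (cstar n s h) + bstar n s (cstar n m h))) +
        bstar n l (cstar n r (bstar n m (cstar n s h) + bstar n s (cstar n m h)))) = 0 :=
  congr($(mul_add_mul_cyclic_eq_zero (bstar n) (cstar n) bstar_mul_bstar cstar_mul_cstar
    commute_bstar_cstar l m r s) h)

end
end

section
/- Let T be a smooth function on J², let p be a real number, and suppose that for every orientation-preserving diffeomorphism F of ℝ (F′ > 0 everywhere) one has T ∘ φ̇_F = (F′(ψ))^{p−1} · T, where φ̇_F(x, ψ, ψ_μ, ψ_{μν}) := (x, F(ψ), F′(ψ)ψ_μ, F′(ψ)ψ_{μν} + F″(ψ)ψ_μψ_ν). Then T satisfies: (i) ∂T = 0; (ii) the homogeneity equation Σ_μ ψ_μ ∂^μ T + Σ_{μ,ν} ψ_{μν} ∂^{μν} T = (p−1) T, equivalently T(x, ψ, λψ_μ, λψ_{μν}) = λ^{p−1} T(x, ψ, ψ_μ, ψ_{μν}) for all λ > 0; and (iii) Σ_{μ,ν} ψ_μ ψ_ν ∂^{μν} T = 0. -/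
open scoped BigOperators

noncomputable section

/-- The first-order scalar jet space `(x, ψ, ψ_μ)` over `ℝ^n`. -/
abbrev J1 (n : ℕ) : Type := (Fin n → ℝ) × ℝ × (Fin n → ℝ)

/-- The second-order scalar jet space `(x, ψ, ψ_μ, ψ_{μν})` over `ℝ^n`, with the
second-order variable represented by a full (not a priori symmetric) matrix. -/
abbrev J2 (n : ℕ) : Type := (Fin n → ℝ) × ℝ × (Fin n → ℝ) × (Fin n → Fin n → ℝ)

/-- The fourth-order scalar jet space `(x, ψ, ψ_μ, ψ_{μν}, ψ_{μνρ}, ψ_{μνρσ})`. -/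
abbrev J4 (n : ℕ) : Type :=
  (Fin n → ℝ) × ℝ × (Fin n → ℝ) × (Fin n → Fin n → ℝ) ×
    ((Fin 3 → Fin n) → ℝ) × ((Fin 4 → Fin n) → ℝ)

/-- Symmetrization of a matrix. -/
def symmM {n : ℕ} (q : Fin n → Fin n → ℝ) : Fin n → Fin n → ℝ :=
  fun i j => (q i j + q j i) / 2

/-- `T` depends only on the symmetric part of the second-order variable, i.e. `T` is the
canonical extension `T̃(q) = T((q+qᵀ)/2)` of a function of the symmetric coordinates `ψ_{μν}`. -/
def SymmDep {n : ℕ} (T : J2 n → ℝ) : Prop :=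
  ∀ x ψ p q, T (x, ψ, p, q) = T (x, ψ, p, symmM q)

/-- The symmetrized elementary matrix `(E_{μν} + E_{νμ})/2`, the direction computing the
normalized derivative `∂^{μν}`. -/
def symE {n : ℕ} (μ ν : Fin n) : Fin n → Fin n → ℝ := fun i j =>
  ((if i = μ ∧ j = ν then (1 : ℝ) else 0) + (if i = ν ∧ j = μ then (1 : ℝ) else 0)) / 2

/-- The symmetrized elementary tensor of order `l` attached to a tuple `μ`, the direction
computing the normalized derivative `∂^{μ₁...μ_l} = (r₁!⋯r_n!/l!) ∂/∂ψ_{{μ₁...μ_l}}`. -/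
def symT {n l : ℕ} (μ : Fin l → Fin n) : (Fin l → Fin n) → ℝ := fun i =>
  (∑ σ : Equiv.Perm (Fin l), if i = μ ∘ σ then (1 : ℝ) else 0) / (l.factorial : ℝ)

/-- `∂T := ∂T/∂ψ` on `J²`. -/
def pdPsi {n : ℕ} (T : J2 n → ℝ) : J2 n → ℝ := fun z => fderiv ℝ T z (0, 1, 0, 0)

/-- `∂T/∂x^μ` on `J²`. -/
def pdX {n : ℕ} (T : J2 n → ℝ) (μ : Fin n) : J2 n → ℝ := fun z =>
  fderiv ℝ T z (Pi.single μ 1, 0, 0, 0)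

/-- `∂^μ T := ∂T/∂ψ_μ` on `J²`. -/
def pd1 {n : ℕ} (T : J2 n → ℝ) (μ : Fin n) : J2 n → ℝ := fun z =>
  fderiv ℝ T z (0, 0, Pi.single μ 1, 0)

/-- The normalized second-order derivative `∂^{μν} T` on `J²`. -/
def pd2 {n : ℕ} (T : J2 n → ℝ) (μ ν : Fin n) : J2 n → ℝ := fun z =>
  fderiv ℝ T z (0, 0, 0, symE μ ν)

/-- The equations (ADK′):
`∂^{μρ₁}∂^{ρ₂ρ₃}T + ∂^{μρ₂}∂^{ρ₃ρ₁}T + ∂^{μρ₃}∂^{ρ₁ρ₂}T = 0`. -/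
def ADKfirst {n : ℕ} (T : J2 n → ℝ) : Prop :=
  ∀ μ ρ₁ ρ₂ ρ₃ : Fin n, ∀ z : J2 n,
    pd2 (pd2 T ρ₂ ρ₃) μ ρ₁ z + pd2 (pd2 T ρ₃ ρ₁) μ ρ₂ z + pd2 (pd2 T ρ₁ ρ₂) μ ρ₃ z = 0

/-- The truncated total derivative `D̃_μ := ∂/∂x^μ + ψ_μ ∂ + Σ_ν ψ_{μν} ∂^ν` acting on
functions on `J²`. -/
def Dt {n : ℕ} (μ : Fin n) (T : J2 n → ℝ) : J2 n → ℝ := fun z =>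
  pdX T μ z + z.2.2.1 μ * pdPsi T z + ∑ ν, z.2.2.2 μ ν * pd1 T ν z

/-- The equations (ADK″): `∂^μ T = Σ_ν (∂/∂x^ν + ψ_ν ∂ + Σ_ρ ψ_{νρ} ∂^ρ) ∂^{μν} T`. -/
def ADKsecond {n : ℕ} (T : J2 n → ℝ) : Prop :=
  ∀ μ : Fin n, ∀ z : J2 n, pd1 T μ z = ∑ ν, Dt ν (pd2 T μ ν) z

open Classical in
/-- The Levi–Civita symbol `ε^{μ₁...μ_n}`. -/
def lc {n : ℕ} (μ : Fin n → Fin n) : ℝ :=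
  if h : Function.Bijective μ then ((Equiv.Perm.sign (Equiv.ofBijective μ h) : ℤ) : ℝ) else 0

/-- The minor `ψ^{μ₁...μ_k;ν₁...ν_k} := (1/(n−k)!) Σ ε^{μ₁...μ_n} ε^{ν₁...ν_n}
ψ_{μ_{k+1}ν_{k+1}} ⋯ ψ_{μ_nν_n}` of the matrix `q`. -/
def minorP {n : ℕ} (k : ℕ) (μ ν : Fin k → Fin n) (q : Fin n → Fin n → ℝ) : ℝ :=
  if h : k + (n - k) = n then
    ((n - k).factorial : ℝ)⁻¹ *
      ∑ a : Fin (n - k) → Fin n, ∑ b : Fin (n - k) → Fin n,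
        lc (Fin.append μ a ∘ Fin.cast h.symm) * lc (Fin.append ν b ∘ Fin.cast h.symm) *
          ∏ i, q (a i) (b i)
  else 0

/-- The coefficients of a minor-polynomial representation: smooth functions of `(x, ψ, ψ_μ)`
only, completely antisymmetric in the `μ`'s, completely antisymmetric in the `ν`'s, and
symmetric under the interchange of the two index groups. -/
def MinorCoeffOK {n : ℕ}
    (c : (k : ℕ) → (Fin k → Fin n) → (Fin k → Fin n) → J1 n → ℝ) : Prop :=
  (∀ k (μ ν : Fin k → Fin n), ContDiff ℝ (⊤ : ℕ∞) (c k μ ν)) ∧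
  (∀ k (μ ν : Fin k → Fin n) (σ : Equiv.Perm (Fin k)) (w : J1 n),
      c k (μ ∘ σ) ν w = ((Equiv.Perm.sign σ : ℤ) : ℝ) * c k μ ν w) ∧
  (∀ k (μ ν : Fin k → Fin n) (σ : Equiv.Perm (Fin k)) (w : J1 n),
      c k μ (ν ∘ σ) w = ((Equiv.Perm.sign σ : ℤ) : ℝ) * c k μ ν w) ∧
  (∀ k (μ ν : Fin k → Fin n) (w : J1 n), c k ν μ w = c k μ ν w)

/-- `T = Σ_{k=0}^{n} (1/(k!)²) T_{μ₁…μ_k;ν₁…ν_k} ψ^{μ₁…μ_k;ν₁…ν_k}` (sum over all repeated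
indices), evaluated on the symmetric part of the second-order variable. -/
def MinorRep {n : ℕ} (T : J2 n → ℝ)
    (c : (k : ℕ) → (Fin k → Fin n) → (Fin k → Fin n) → J1 n → ℝ) : Prop :=
  ∀ x ψ p q, T (x, ψ, p, q) =
    ∑ k ∈ Finset.range (n + 1), ((k.factorial : ℝ)⁻¹) ^ 2 *
      ∑ μ : Fin k → Fin n, ∑ ν : Fin k → Fin n,
        c k μ ν (x, ψ, p) * minorP k μ ν (symmM q)

/-- `T` has the minor-polynomial form of Theorem 2. -/
def MinorPolyForm {n : ℕ} (T : J2 n → ℝ) : Prop :=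
  ∃ c, MinorCoeffOK c ∧ MinorRep T c

/-! ### Fourth-order machinery -/

/-- The canonical projection `π : J⁴ → J²`. -/
def proj24 {n : ℕ} (z : J4 n) : J2 n := (z.1, z.2.1, z.2.2.1, z.2.2.2.1)

def pdPsi4 {n : ℕ} (f : J4 n → ℝ) : J4 n → ℝ := fun z => fderiv ℝ f z (0, 1, 0, 0, 0, 0)

def pdX4 {n : ℕ} (f : J4 n → ℝ) (μ : Fin n) : J4 n → ℝ := fun z =>
  fderiv ℝ f z (Pi.single μ 1, 0, 0, 0, 0, 0)

def pd14 {n : ℕ} (f : J4 n → ℝ) (μ : Fin n) : J4 n → ℝ := fun z =>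
  fderiv ℝ f z (0, 0, Pi.single μ 1, 0, 0, 0)

def pd24 {n : ℕ} (f : J4 n → ℝ) (μ ν : Fin n) : J4 n → ℝ := fun z =>
  fderiv ℝ f z (0, 0, 0, symE μ ν, 0, 0)

/-- The normalized third-order derivative `∂^{μνρ}` on `J⁴`. -/
def pd34 {n : ℕ} (f : J4 n → ℝ) (μ ν ρ : Fin n) : J4 n → ℝ := fun z =>
  fderiv ℝ f z (0, 0, 0, 0, symT ![μ, ν, ρ], 0)

/-- The total derivative
`D_μ f = ∂f/∂x^μ + ψ_μ ∂f + ψ_{μν} ∂^ν f + ψ_{μνρ} ∂^{νρ} f + ψ_{μνρσ} ∂^{νρσ} f`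
(summation over repeated indices) on `J⁴`. -/
def Dtot {n : ℕ} (μ : Fin n) (f : J4 n → ℝ) : J4 n → ℝ := fun z =>
  pdX4 f μ z + z.2.2.1 μ * pdPsi4 f z + (∑ ν, z.2.2.2.1 μ ν * pd14 f ν z) +
    (∑ ν, ∑ ρ, z.2.2.2.2.1 ![μ, ν, ρ] * pd24 f ν ρ z) +
    (∑ ν, ∑ ρ, ∑ σ, z.2.2.2.2.2 ![μ, ν, ρ, σ] * pd34 f ν ρ σ z)

/-- The Euler–Lagrange expression `E(L) := ∂L − D_μ(∂^μ L) + D_μ D_ν (∂^{μν} L)` of a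
second-order Lagrangian, a function on `J⁴`. -/
def EL {n : ℕ} (L : J2 n → ℝ) : J4 n → ℝ := fun z =>
  pdPsi L (proj24 z) - (∑ μ, Dtot μ (fun w => pd1 L μ (proj24 w)) z) +
    ∑ μ, ∑ ν, Dtot μ (Dtot ν (fun w => pd2 L μ ν (proj24 w))) z

/-- The reduced second-order Euler–Lagrange expression
`∂L − D̃_μ(∂^μL) + D̃_{μ₁}D̃_{μ₂}(∂^{μ₁μ₂}L)`, a function on `J²`. -/
def EL2 {n : ℕ} (L : J2 n → ℝ) : J2 n → ℝ := fun z =>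
  pdPsi L z - (∑ μ, Dt μ (pd1 L μ) z) + ∑ μ, ∑ ν, Dt μ (Dt ν (pd2 L μ ν)) z

/-- The Tonti Lagrangian `L = ∫₀¹ ψ T(x, λψ, λψ_μ, λψ_{μν}) dλ`. -/
def Tonti {n : ℕ} (T : J2 n → ℝ) : J2 n → ℝ := fun z =>
  ∫ lam in (0 : ℝ)..1, z.2.1 * T (z.1, lam * z.2.1, lam • z.2.2.1, lam • z.2.2.2)

/-! ### First-order derivative operators -/

def pdX1 {n : ℕ} (f : J1 n → ℝ) (μ : Fin n) : J1 n → ℝ := fun w =>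
  fderiv ℝ f w (Pi.single μ 1, 0, 0)

def pdPsi1 {n : ℕ} (f : J1 n → ℝ) : J1 n → ℝ := fun w => fderiv ℝ f w (0, 1, 0)

def pd11 {n : ℕ} (f : J1 n → ℝ) (μ : Fin n) : J1 n → ℝ := fun w =>
  fderiv ℝ f w (0, 0, Pi.single μ 1)

/-- `δ/δx^μ := ∂/∂x^μ + ψ_μ ∂` on functions of `(x, ψ, ψ_μ)`. -/
def dX1var {n : ℕ} (f : J1 n → ℝ) (μ : Fin n) : J1 n → ℝ := fun w =>
  pdX1 f μ w + w.2.2 μ * pdPsi1 f w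

/-! ### Minkowski structures -/

/-- The Minkowski metric `G = diag(1, −1, …, −1)` on `ℝ^n`. -/
def MinkG (n : ℕ) : Fin n → Fin n → ℝ := fun i j =>
  if i = j then (if (i : ℕ) = 0 then 1 else -1) else 0

/-- The proper orthochronous Lorentz group. -/
def IsLorentz {n : ℕ} (L : Fin n → Fin n → ℝ) : Prop :=
  (∀ i j, ∑ ρ, ∑ σ, L ρ i * MinkG n ρ σ * L σ j = MinkG n i j) ∧
    Matrix.det (Matrix.of L) = 1 ∧ ∀ h : 0 < n, 1 ≤ L ⟨0, h⟩ ⟨0, h⟩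

/-- The (lifted) action of the Poincaré group on `J²`:
`φ̇_{L,a}(x,ψ,ψ_μ,ψ_{μν}) = (Lx+a, ψ, L_μ^ρ ψ_ρ, L_μ^ρ L_ν^σ ψ_{ρσ})`. -/
def pact {n : ℕ} (L : Fin n → Fin n → ℝ) (a : Fin n → ℝ) (z : J2 n) : J2 n :=
  (fun μ => (∑ ν, L μ ν * z.1 ν) + a μ, z.2.1,
   fun μ => ∑ ρ, L μ ρ * z.2.2.1 ρ,
   fun μ ν => ∑ ρ, ∑ σ, L μ ρ * L ν σ * z.2.2.2 ρ σ)

/-- The Lorentz invariant `J = G^{μν} ψ_μ ψ_ν`. -/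
def MinkJ {n : ℕ} (p : Fin n → ℝ) : ℝ := ∑ μ, ∑ ν, MinkG n μ ν * p μ * p ν

/-- The Lorentz invariant `I_k := (Π_{i=1}^k G_{μ_iν_i}) ψ^{μ₁…μ_k;ν₁…ν_k}`. -/
def Ik {n : ℕ} (k : ℕ) (q : Fin n → Fin n → ℝ) : ℝ :=
  ∑ μ : Fin k → Fin n, ∑ ν : Fin k → Fin n,
    (∏ i, MinkG n (μ i) (ν i)) * minorP k μ ν q

/-- The Lorentz invariant `J_k := ψ_{μ₁}ψ_{ν₁} (Π_{i=2}^k G_{μ_iν_i}) ψ^{μ₁…μ_k;ν₁…ν_k}`. -/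
def Jk {n : ℕ} (k : ℕ) (p : Fin n → ℝ) (q : Fin n → Fin n → ℝ) : ℝ :=
  if h : 0 < k then
    ∑ μ : Fin k → Fin n, ∑ ν : Fin k → Fin n,
      p (μ ⟨0, h⟩) * p (ν ⟨0, h⟩) *
        (∏ i ∈ Finset.univ.erase (⟨0, h⟩ : Fin k), MinkG n (μ i) (ν i)) * minorP k μ ν q
  else 0

/-- Derivative with respect to the first variable `ψ` of a function of `(ψ, J)`. -/
def d1 (F : ℝ × ℝ → ℝ) : ℝ × ℝ → ℝ := fun w => fderiv ℝ F w (1, 0)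

/-- Derivative with respect to the second variable `J` of a function of `(ψ, J)`. -/
def d2 (F : ℝ × ℝ → ℝ) : ℝ × ℝ → ℝ := fun w => fderiv ℝ F w (0, 1)

/-- The Poincaré-invariant normal form
`T = A₀ det(ψ_{μν}) + Σ_{k=1}^{n−1} (A_k I_k + B_k J_k) + A_n`. -/
def PoincT (n : ℕ) (A B : ℕ → ℝ × ℝ → ℝ) : J2 n → ℝ := fun z =>
  A 0 (z.2.1, MinkJ z.2.2.1) * Matrix.det (Matrix.of (symmM z.2.2.2)) +
    (∑ k ∈ Finset.Icc 1 (n - 1),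
      (A k (z.2.1, MinkJ z.2.2.1) * Ik k (symmM z.2.2.2) +
        B k (z.2.1, MinkJ z.2.2.1) * Jk k z.2.2.1 (symmM z.2.2.2))) +
    A n (z.2.1, MinkJ z.2.2.1)

/-- Equation (einv1): `∂A_{k−1}/∂ψ − 2k ∂A_k/∂J − 2J ∂B_k/∂J − (n+k) B_k = 0`
for `k = 1, …, n−1`. -/
def Einv1 (n : ℕ) (A B : ℕ → ℝ × ℝ → ℝ) : Prop :=
  ∀ m : ℕ, m + 1 ≤ n - 1 → ∀ w : ℝ × ℝ,
    d1 (A m) w - 2 * ((m : ℝ) + 1) * d2 (A (m + 1)) w - 2 * w.2 * d2 (B (m + 1)) w -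
      ((n : ℝ) + ((m : ℝ) + 1)) * B (m + 1) w = 0

/-- Equation (einv2): `∂B_k/∂ψ = 0` for `k = 1, …, n−2`. -/
def Einv2 (n : ℕ) (B : ℕ → ℝ × ℝ → ℝ) : Prop :=
  ∀ m : ℕ, m + 1 ≤ n - 2 → ∀ w : ℝ × ℝ, d1 (B (m + 1)) w = 0

/-- Equation (einv3): `2 ∂A_n/∂J + (n−1)! ∂A_{n−1}/∂ψ = 0`. -/
def Einv3 (n : ℕ) (A : ℕ → ℝ × ℝ → ℝ) : Prop :=
  ∀ w : ℝ × ℝ, 2 * d2 (A n) w + ((n - 1).factorial : ℝ) * d1 (A (n - 1)) w = 0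


/-- The lifted action `φ̇_F` of a diffeomorphism `F` of the field space `ℝ` on `J²`. -/
def uact {n : ℕ} (F : ℝ → ℝ) (z : J2 n) : J2 n :=
  (z.1, F z.2.1, fun μ => deriv F z.2.1 * z.2.2.1 μ,
   fun μ ν => deriv F z.2.1 * z.2.2.2 μ ν + deriv (deriv F) z.2.1 * z.2.2.1 μ * z.2.2.1 ν)


/-!
The invariance is tested on three one-parameter families of diffeomorphisms of the field line.
Translations `t ↦ t + a` show that `T` does not depend on `ψ`. Dilations `t ↦ λ t` then give the
homogeneity of degree `p - 1` in `(ψ_μ, ψ_{μν})`, whose derivative at `λ = 1` is Euler's identity.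
Finally `t ↦ t + s (1 - cos (t - ψ))` (a diffeomorphism for `|s| < 1`) fixes `ψ` with derivative `1`
and second derivative `s` there, so its prolongation just adds `s ψ_μ ψ_ν` to `ψ_{μν}`; invariance
under it, differentiated at `s = 0`, gives `ψ_μ ψ_ν ∂^{μν} T = 0`.
-/

open Real Filter Topology

theorem Continuous.surjective_of_abs_sub_le {F : ℝ → ℝ} (hF : Continuous F) {C : ℝ}
    (hC : ∀ t, |F t - t| ≤ C) : Function.Surjective F :=
  hF.surjective
    (tendsto_atTop_mono (fun t => by simp only [id]; linarith [(abs_le.mp (hC t)).1])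
      (tendsto_atTop_add_const_right _ (-C) tendsto_id))
    (tendsto_atBot_mono (fun t => by simp only [id]; linarith [(abs_le.mp (hC t)).2])
      (tendsto_atBot_add_const_right _ C tendsto_id))

def cosShear (s c t : ℝ) : ℝ := t + s * (1 - cos (t - c))

section cosShear

variable {s c : ℝ}

theorem hasDerivAt_cosShear (t : ℝ) : HasDerivAt (cosShear s c) (1 + s * sin (t - c)) t :=
  ((hasDerivAt_id' t).add
    ((((hasDerivAt_id' t).sub_const c).cos.const_sub 1).const_mul s)).congr_deriv (by simp)

theorem deriv_cosShear : deriv (cosShear s c) = fun t => 1 + s * sin (t - c) :=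
  funext fun t => (hasDerivAt_cosShear t).deriv

theorem deriv_deriv_cosShear_self : deriv (deriv (cosShear s c)) c = s := by
  simp [deriv_cosShear]

theorem contDiff_cosShear : ContDiff ℝ (⊤ : ℕ∞) (cosShear s c) := by
  unfold cosShear; fun_prop

theorem deriv_cosShear_pos (hs : |s| < 1) (t : ℝ) : 0 < deriv (cosShear s c) t := by
  have : |s * sin (t - c)| < 1 := by
    rw [abs_mul]
    nlinarith [abs_sin_le_one (t - c), abs_nonneg (sin (t - c)), abs_nonneg s]
  rw [deriv_cosShear]
  linarith [neg_abs_le (s * sin (t - c))]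

theorem bijective_cosShear (hs : |s| < 1) : Function.Bijective (cosShear s c) := by
  refine ⟨(strictMono_of_deriv_pos (deriv_cosShear_pos hs)).injective,
    contDiff_cosShear.continuous.surjective_of_abs_sub_le (C := 2) fun t => ?_⟩
  have h1 : |1 - cos (t - c)| ≤ 2 := abs_le.mpr ⟨by linarith [cos_le_one (t - c)],
    by linarith [neg_one_le_cos (t - c)]⟩
  simp only [cosShear, add_sub_cancel_left, abs_mul]
  nlinarith [abs_nonneg (1 - cos (t - c))]

end cosShear

section uact

variable {n : ℕ}

theorem uact_add_const (a : ℝ) (z : J2 n) :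
    uact (· + a) z = (z.1, z.2.1 + a, z.2.2.1, z.2.2.2) := by
  simp [uact]

theorem uact_const_mul (lam : ℝ) (z : J2 n) :
    uact (lam * ·) z = (z.1, lam * z.2.1, lam • z.2.2.1, lam • z.2.2.2) := by
  ext <;> simp [uact]

theorem uact_cosShear_self (s : ℝ) (z : J2 n) :
    uact (cosShear s z.2.1) z =
      (z.1, z.2.1, z.2.2.1, z.2.2.2 + s • fun μ ν => z.2.2.1 μ * z.2.2.1 ν) := by
  have hfix : cosShear s z.2.1 z.2.1 = z.2.1 := by simp [cosShear]
  have hderiv : deriv (cosShear s z.2.1) z.2.1 = 1 := by simp [deriv_cosShear]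
  simp only [uact, hfix, hderiv, deriv_deriv_cosShear_self, one_mul]
  ext <;> simp [mul_assoc]

end uact

def IsUniversallyInvariant {n : ℕ} (T : J2 n → ℝ) (p : ℝ) : Prop :=
  ∀ F : ℝ → ℝ, ContDiff ℝ (⊤ : ℕ∞) F → (∀ t, 0 < deriv F t) → Function.Bijective F →
    ∀ z : J2 n, T (uact F z) = deriv F z.2.1 ^ (p - 1) * T z

namespace IsUniversallyInvariant

variable {n : ℕ} {T : J2 n → ℝ} {p : ℝ}

theorem apply_add_psi (h : IsUniversallyInvariant T p) (z : J2 n) (a : ℝ) :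
    T (z.1, z.2.1 + a, z.2.2) = T z := by
  simpa [uact_add_const] using
    h (· + a) (by fun_prop) (by simp) (Equiv.addRight a).bijective z

theorem apply_psi (h : IsUniversallyInvariant T p) (z : J2 n) (ψ : ℝ) :
    T (z.1, ψ, z.2.2) = T z := by
  simpa using h.apply_add_psi z (ψ - z.2.1)

theorem apply_smul (h : IsUniversallyInvariant T p) (z : J2 n) {lam : ℝ} (hlam : 0 < lam) :
    T (z.1, z.2.1, lam • z.2.2.1, lam • z.2.2.2) = lam ^ (p - 1) * T z := by
  refine (h.apply_psi (z.1, lam * z.2.1, lam • z.2.2.1, lam • z.2.2.2) z.2.1).trans ?_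
  rw [← uact_const_mul]
  simpa using
    h (lam * ·) (by fun_prop) (by simpa using hlam) (Equiv.mulLeft₀ lam hlam.ne').bijective z

theorem apply_add_smul_outer (h : IsUniversallyInvariant T p) (z : J2 n) {s : ℝ} (hs : |s| < 1) :
    T (z.1, z.2.1, z.2.2.1, z.2.2.2 + s • fun μ ν => z.2.2.1 μ * z.2.2.1 ν) = T z := by
  simpa [uact_cosShear_self, deriv_cosShear] using
    h (cosShear s z.2.1) contDiff_cosShear (deriv_cosShear_pos hs) (bijective_cosShear hs) z

end IsUniversallyInvariant

theorem fderiv_apply_eq_of_line_eventuallyEq {E : Type*} [NormedAddCommGroup E]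
    [NormedSpace ℝ E] {f : E → ℝ} {x v : E} {g : ℝ → ℝ} {c : ℝ} (hf : DifferentiableAt ℝ f x)
    (hg : HasDerivAt g c 0) (hfg : (fun t : ℝ => f (x + t • v)) =ᶠ[𝓝 0] g) :
    fderiv ℝ f x v = c :=
  (hf.hasFDerivAt.hasLineDerivAt v).unique (hg.congr_of_eventuallyEq hfg)

section partialDerivatives

variable {n : ℕ}

theorem symmM_add_smul (q r : Fin n → Fin n → ℝ) (t : ℝ) :
    symmM (q + t • r) = symmM q + t • symmM r := by
  ext i j; simp only [symmM, Pi.add_apply, Pi.smul_apply, smul_eq_mul]; ring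

theorem symmM_symmM (q : Fin n → Fin n → ℝ) : symmM (symmM q) = symmM q := by
  ext i j; simp only [symmM]; ring

theorem sum_smul_symE (q : Fin n → Fin n → ℝ) : ∑ μ, ∑ ν, q μ ν • symE μ ν = symmM q := by
  ext i j
  simp only [Finset.sum_apply, Pi.smul_apply, symE, ite_and, add_div, ite_div, zero_div,
    smul_eq_mul, mul_add, mul_ite, mul_zero, Finset.sum_add_distrib, Finset.sum_ite_irrel,
    Finset.sum_ite_eq, Finset.mem_univ, ↓reduceIte, Finset.sum_const_zero, symmM]
  ring

theorem sum_mul_pd1 (T : J2 n → ℝ) (z : J2 n) (v : Fin n → ℝ) :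
    ∑ μ, v μ * pd1 T μ z = fderiv ℝ T z (0, 0, v, 0) := by
  have hv : ((0, 0, v, 0) : J2 n) = ∑ μ, v μ • ((0, 0, Pi.single μ 1, 0) : J2 n) := by
    ext <;> simp [Prod.fst_sum, Prod.snd_sum, Finset.sum_apply, Pi.single_apply]
  rw [hv, map_sum]
  simp only [map_smul, smul_eq_mul, pd1]

theorem sum_mul_pd2 (T : J2 n → ℝ) (z : J2 n) (q : Fin n → Fin n → ℝ) :
    ∑ μ, ∑ ν, q μ ν * pd2 T μ ν z = fderiv ℝ T z (0, 0, 0, symmM q) := by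
  have hq : ((0, 0, 0, symmM q) : J2 n) = ∑ μ, ∑ ν, q μ ν • ((0, 0, 0, symE μ ν) : J2 n) := by
    rw [← sum_smul_symE]
    ext <;> simp [Prod.fst_sum, Prod.snd_sum, Finset.sum_apply]
  simp only [hq, map_sum, map_smul, smul_eq_mul, pd2]

theorem SymmDep.sum_mul_pd2 {T : J2 n → ℝ} (hsym : SymmDep T) {z : J2 n}
    (hT : DifferentiableAt ℝ T z) (q : Fin n → Fin n → ℝ) :
    ∑ μ, ∑ ν, q μ ν * pd2 T μ ν z = fderiv ℝ T z (0, 0, 0, q) := by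
  rcases z with ⟨x, ψ, v, Q⟩
  rw [_root_.sum_mul_pd2]
  refine fderiv_apply_eq_of_line_eventuallyEq hT (hT.hasFDerivAt.hasLineDerivAt _)
    (Eventually.of_forall fun t => ?_)
  simp only [Prod.smul_mk, Prod.mk_add_mk, smul_zero, add_zero]
  rw [hsym, symmM_add_smul, symmM_symmM, ← symmM_add_smul, ← hsym]

end partialDerivatives

namespace IsUniversallyInvariant

variable {n : ℕ} {T : J2 n → ℝ} {p : ℝ}

theorem pdPsi_eq_zero (h : IsUniversallyInvariant T p) {z : J2 n}
    (hT : DifferentiableAt ℝ T z) : pdPsi T z = 0 := by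
  refine fderiv_apply_eq_of_line_eventuallyEq hT (hasDerivAt_const 0 (T z))
    (Eventually.of_forall fun t => ?_)
  simpa [Prod.add_def] using h.apply_add_psi z t

theorem euler_homogeneous (h : IsUniversallyInvariant T p) (hsym : SymmDep T) {z : J2 n}
    (hT : DifferentiableAt ℝ T z) :
    ∑ μ, z.2.2.1 μ * pd1 T μ z + ∑ μ, ∑ ν, z.2.2.2 μ ν * pd2 T μ ν z = (p - 1) * T z := by
  have hscale : HasDerivAt (fun t : ℝ => (1 + t) ^ (p - 1) * T z) ((p - 1) * T z) 0 := by
    simpa using (((hasDerivAt_id (0 : ℝ)).const_add 1).rpow_const (p := p - 1)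
      (Or.inl (by norm_num))).mul_const (T z)
  rw [sum_mul_pd1, hsym.sum_mul_pd2 hT, ← map_add]
  refine fderiv_apply_eq_of_line_eventuallyEq hT hscale ?_
  filter_upwards [Ioi_mem_nhds (show (-1 : ℝ) < 0 by norm_num)] with t ht
  simpa [Prod.add_def, add_smul] using
    h.apply_smul z (lam := 1 + t) (by linarith [Set.mem_Ioi.mp ht])

theorem sum_mul_pd2_outer_eq_zero (h : IsUniversallyInvariant T p) {z : J2 n}
    (hT : DifferentiableAt ℝ T z) :
    ∑ μ, ∑ ν, z.2.2.1 μ * z.2.2.1 ν * pd2 T μ ν z = 0 := by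
  have houter : symmM (fun μ ν => z.2.2.1 μ * z.2.2.1 ν) = fun μ ν => z.2.2.1 μ * z.2.2.1 ν := by
    ext μ ν; simp only [symmM]; ring
  rw [sum_mul_pd2 T z (fun μ ν => z.2.2.1 μ * z.2.2.1 ν), houter]
  refine fderiv_apply_eq_of_line_eventuallyEq hT (hasDerivAt_const 0 (T z)) ?_
  filter_upwards [Ioo_mem_nhds (show (-1 : ℝ) < 0 by norm_num) one_pos] with s hs
  simpa [Prod.add_def] using h.apply_add_smul_outer z (abs_lt.mpr hs)

end IsUniversallyInvariant

theorem universal_invariance_infinitesimal {n : ℕ} (T : J2 n → ℝ)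
    (hT : ContDiff ℝ (⊤ : ℕ∞) T) (hsym : SymmDep T) (p : ℝ)
    (hinv : ∀ F : ℝ → ℝ, ContDiff ℝ (⊤ : ℕ∞) F → (∀ t, 0 < deriv F t) →
      Function.Bijective F →
      ∀ z : J2 n, T (uact F z) = Real.rpow (deriv F z.2.1) (p - 1) * T z) :
    (∀ z : J2 n, pdPsi T z = 0) ∧
    (∀ z : J2 n, (∑ μ, z.2.2.1 μ * pd1 T μ z) + (∑ μ, ∑ ν, z.2.2.2 μ ν * pd2 T μ ν z) =
      (p - 1) * T z) ∧
    (∀ (z : J2 n) (lam : ℝ), 0 < lam →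
      T (z.1, z.2.1, lam • z.2.2.1, lam • z.2.2.2) = Real.rpow lam (p - 1) * T z) ∧
    (∀ z : J2 n, (∑ μ, ∑ ν, z.2.2.1 μ * z.2.2.1 ν * pd2 T μ ν z) = 0) := by
  have h : IsUniversallyInvariant T p := hinv
  have hTd : Differentiable ℝ T := hT.differentiable (by simp)
  exact ⟨fun z => h.pdPsi_eq_zero (hTd z), fun z => h.euler_homogeneous hsym (hTd z),
    fun z _ hlam => h.apply_smul z hlam, fun z => h.sum_mul_pd2_outer_eq_zero (hTd z)⟩

end
end

section
/- Let T be a smooth function on J² satisfying (ADK″), i.e. ∂^μT = Σ_ν (∂/∂x^ν + ψ_ν ∂ + Σ_ρ ψ_{νρ} ∂^ρ) ∂^{μν}T for all μ. Then T automatically satisfies the scalar form of the remaining Helmholtz-type condition (ADK4): − D̃_μ(∂^μ T) + D̃_{μ₁} D̃_{μ₂}(∂^{μ₁μ₂} T) = 0, where D̃_μ := ∂/∂x^μ + ψ_μ ∂ + Σ_ν ψ_{μν} ∂^ν and summation over repeated indices is understood. -/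
open scoped BigOperators

noncomputable section

/-! (ADK″) writes `∂^μ T` as `Σ_ν D̃_ν ∂^{μν} T`. The truncated total derivative `D̃_μ` is a
first-order differential operator, hence additive on differentiable functions, so applying it
to (ADK″) and summing over `μ` turns `D̃_μ(∂^μ T)` into `D̃_μ D̃_ν(∂^{μν} T)`. -/

theorem ContDiff.fderiv_right_apply {E F : Type*} [NormedAddCommGroup E] [NormedSpace ℝ E]
    [NormedAddCommGroup F] [NormedSpace ℝ F] {m k : WithTop ℕ∞} {f : E → F}
    (hf : ContDiff ℝ k f) (hmk : m + 1 ≤ k) (v : E) : ContDiff ℝ m fun x => fderiv ℝ f x v :=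
  (hf.fderiv_right hmk).clm_apply contDiff_const

section TruncatedTotalDerivative

variable {n : ℕ}

theorem ContDiff.dt {m k : WithTop ℕ∞} {f : J2 n → ℝ} (hf : ContDiff ℝ k f) (hmk : m + 1 ≤ k)
    (μ : Fin n) : ContDiff ℝ m (Dt μ f) := by
  have hDf : ∀ v, ContDiff ℝ m fun z => fderiv ℝ f z v := hf.fderiv_right_apply hmk
  unfold Dt pdX pdPsi pd1
  fun_prop

theorem dt_sum {ι : Type*} (s : Finset ι) (f : ι → J2 n → ℝ) (μ : Fin n) (z : J2 n)
    (hf : ∀ i ∈ s, DifferentiableAt ℝ (f i) z) :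
    Dt μ (fun w => ∑ i ∈ s, f i w) z = ∑ i ∈ s, Dt μ (f i) z := by
  simp only [Dt, pdX, pdPsi, pd1, fderiv_fun_sum hf, sum_apply, Finset.mul_sum,
    Finset.sum_add_distrib]
  rw [Finset.sum_comm]

end TruncatedTotalDerivative

theorem ADK4_follows_from_ADK''_general {n : ℕ} (T : J2 n → ℝ)
    (hT : ContDiff ℝ (⊤ : ℕ∞) T) (h2 : ADKsecond T) :
    ∀ z : J2 n,
      -(∑ μ, Dt μ (pd1 T μ) z) + (∑ μ, ∑ ν, Dt μ (Dt ν (pd2 T μ ν)) z) = 0 := by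
  intro z
  have hDpd2 : ∀ μ ν, ContDiff ℝ (⊤ : ℕ∞) (Dt ν (pd2 T μ ν)) := fun μ ν =>
    (hT.fderiv_right_apply (m := (⊤ : ℕ∞)) (by simp) _).dt (by simp) ν
  have hpd1 : ∀ μ, Dt μ (pd1 T μ) z = ∑ ν, Dt μ (Dt ν (pd2 T μ ν)) z := fun μ => by
    rw [show pd1 T μ = fun w => ∑ ν, Dt ν (pd2 T μ ν) w from funext (h2 μ)]
    exact dt_sum _ _ μ z fun ν _ => (hDpd2 μ ν).differentiable (by simp) z
  simp only [hpd1, neg_add_cancel]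

theorem ADK4_follows_from_ADK'' {n : ℕ} (T : J2 n → ℝ)
    (hT : ContDiff ℝ (⊤ : ℕ∞) T) (hsym : SymmDep T) (h2 : ADKsecond T) :
    ∀ z : J2 n,
      -(∑ μ, Dt μ (pd1 T μ) z) + (∑ μ, ∑ ν, Dt μ (Dt ν (pd2 T μ ν)) z) = 0 :=
  ADK4_follows_from_ADK''_general T hT h2

end
end

section
/- Let T₀ and T^{ρσ} = T^{σρ} be smooth functions of (x^μ, ψ, ψ_μ) and let T := T₀ + Σ_{ρ,σ} T^{ρσ} ψ_{ρσ} on J² (so T is affine in the second-order variables, as is the case for equations coming from a first-order Lagrangian). Let p be a real number. Then T satisfies (ADK″) together with the universal-invariance conditions [(i) ∂T = 0; (ii) Σ ψ_μ∂^μT + Σ ψ_{μν}∂^{μν}T = (p−1)T; (iii) Σ ψ_μψ_ν∂^{μν}T = 0] if and only if: ∂T₀ = 0; ∂T^{ρσ} = 0 for all ρ,σ; T₀(x, λψ_μ) = λ^{p−1} T₀(x, ψ_μ) for all λ > 0; T^{ρσ}(x, λψ_μ) = λ^{p−2} T^{ρσ}(x, ψ_μ) for all λ > 0; Σ_{ρ,σ}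 ψ_ρ ψ_σ T^{ρσ} = 0; ∂^ρ T^{μν} − ∂^μ T^{ρν} = 0 for all ρ,μ,ν; and ∂^ρ T₀ = Σ_σ ∂T^{ρσ}/∂x^σ for all ρ. -/
open scoped BigOperators

noncomputable section

/-! Since `T = T₀ + T^{ρσ} ψ_{ρσ}` with coefficients depending only on `(x, ψ, ψ_μ)`, each of the
four conditions on `T` is an identity between functions affine in the variables `ψ_{ρσ}` (an
arbitrary matrix), so it holds iff the constant terms and the `ψ_{ρσ}`-coefficients agree. For
(ADK″) this gives `∂^ρ T₀ = Σ_σ δ T^{ρσ}/δx^σ` and `∂^μ T^{ρσ} = ∂^σ T^{μρ}`, which for symmetric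
`T^{ρσ}` is the stated exchange identity; condition (i) gives `∂T₀ = ∂T^{ρσ} = 0`; condition (ii)
gives Euler identities of degrees `p − 1` and `p − 2` in `ψ_μ`, equivalent to the scaling laws by
Euler's theorem on homogeneous functions. -/

section Homogeneous

variable {F : Type*} [NormedAddCommGroup F] [NormedSpace ℝ F] {g : F → ℝ}

theorem hasDerivAt_comp_smul_const {φ : ℝ → ℝ} {φ' s : ℝ} (hφ : HasDerivAt φ φ' s) (v : F)
    (hg : DifferentiableAt ℝ g (φ s • v)) :
    HasDerivAt (fun t => g (φ t • v)) (φ' * fderiv ℝ g (φ s • v) v) s := by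
  have h := hg.hasFDerivAt.comp_hasDerivAt s (hφ.smul_const v)
  rw [map_smul, smul_eq_mul] at h
  exact h

theorem homogeneous_iff_euler (hg : Differentiable ℝ g) (c : ℝ) :
    (∀ v, ∀ t : ℝ, 0 < t → g (t • v) = t ^ c * g v) ↔ ∀ v, fderiv ℝ g v v = c * g v := by
  constructor
  · intro hom v
    have hray : (fun t : ℝ => g (t • v)) =ᶠ[nhds 1] fun t => t ^ c * g v :=
      Filter.eventually_of_mem (Ioi_mem_nhds one_pos) fun t ht => hom v t ht
    have hpow : HasDerivAt (fun t : ℝ => t ^ c * g v) (c * g v) 1 := by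
      simpa using (Real.hasDerivAt_rpow_const (p := c) (Or.inl one_ne_zero)).mul_const (g v)
    have hline := hasDerivAt_comp_smul_const (hasDerivAt_id 1) v (by simpa using hg v)
    simpa using hline.unique (hpow.congr_of_eventuallyEq hray)
  · intro euler v t ht
    -- `s ↦ exp (-c s) g (exp s • v)` is constant: its derivative vanishes by Euler's identity.
    have hH : ∀ s, HasDerivAt (fun s => Real.exp (-(c * s)) * g (Real.exp s • v)) 0 s := by
      intro s
      have hexp : HasDerivAt (fun s => Real.exp (-(c * s))) (Real.exp (-(c * s)) * -c) s := by
        simpa using ((hasDerivAt_id s).const_mul c).neg.exp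
      have he := euler (Real.exp s • v)
      rw [map_smul, smul_eq_mul] at he
      refine (hexp.mul (hasDerivAt_comp_smul_const (Real.hasDerivAt_exp s) v (hg _))).congr_deriv
        ?_
      rw [he]
      ring
    have hconst := is_const_of_deriv_eq_zero (fun s => (hH s).differentiableAt)
      (fun s => (hH s).deriv) (Real.log t) 0
    simp only [Real.exp_log ht, mul_zero, neg_zero, Real.exp_zero, one_mul, one_smul]
      at hconst
    rw [← hconst, Real.rpow_def_of_pos ht, ← mul_assoc, ← Real.exp_add]
    ring_nf
    rw [Real.exp_zero, one_mul]

end Homogeneous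

section JetCalculus

variable {n : ℕ}

def jetProj (n : ℕ) : J2 n →L[ℝ] J1 n :=
  (ContinuousLinearMap.id ℝ _).prodMap
    ((ContinuousLinearMap.id ℝ ℝ).prodMap (ContinuousLinearMap.fst ℝ _ _))

@[simp] theorem jetProj_apply (z : J2 n) : jetProj n z = (z.1, z.2.1, z.2.2.1) := rfl

def quasilinear (T0 : J1 n → ℝ) (Tq : Fin n → Fin n → J1 n → ℝ) : J2 n → ℝ := fun z =>
  T0 (jetProj n z) + ∑ ρ, ∑ σ, Tq ρ σ (jetProj n z) * z.2.2.2 ρ σ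

theorem hasFDerivAt_comp_jetProj {g : J1 n → ℝ} {z : J2 n}
    (hg : DifferentiableAt ℝ g (jetProj n z)) :
    HasFDerivAt (fun z => g (jetProj n z)) ((fderiv ℝ g (jetProj n z)).comp (jetProj n)) z :=
  hg.hasFDerivAt.comp z (jetProj n).hasFDerivAt

theorem fderiv_quasilinear {T0 : J1 n → ℝ} {Tq : Fin n → Fin n → J1 n → ℝ}
    (h0 : Differentiable ℝ T0) (hq : ∀ ρ σ, Differentiable ℝ (Tq ρ σ)) (z v : J2 n) :
    fderiv ℝ (quasilinear T0 Tq) z v = fderiv ℝ T0 (jetProj n z) (jetProj n v) +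
      ∑ ρ, ∑ σ, (fderiv ℝ (Tq ρ σ) (jetProj n z) (jetProj n v) * z.2.2.2 ρ σ +
        Tq ρ σ (jetProj n z) * v.2.2.2 ρ σ) := by
  have hcoord (ρ σ : Fin n) :=
    ((ContinuousLinearMap.proj σ : (Fin n → ℝ) →L[ℝ] ℝ).comp
      ((ContinuousLinearMap.proj ρ : (Fin n → Fin n → ℝ) →L[ℝ] _).comp
        ((ContinuousLinearMap.snd ℝ (Fin n → ℝ) _).comp ((ContinuousLinearMap.snd ℝ ℝ _).comp
          (ContinuousLinearMap.snd ℝ (Fin n → ℝ) _))))).hasFDerivAt (x := z)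
  have hD : HasFDerivAt (quasilinear T0 Tq) _ z :=
    (hasFDerivAt_comp_jetProj (h0 _)).add (HasFDerivAt.fun_sum fun ρ _ =>
      HasFDerivAt.fun_sum fun σ _ => (hasFDerivAt_comp_jetProj (hq ρ σ _)).mul (hcoord ρ σ))
  rw [hD.fderiv]
  simp [add_comm, mul_comm]

theorem Dt_comp_jetProj {g : J1 n → ℝ} (hg : Differentiable ℝ g) (ν : Fin n) (z : J2 n) :
    Dt ν (fun z => g (jetProj n z)) z =
      dX1var g ν (jetProj n z) + ∑ ρ, pd11 g ρ (jetProj n z) * z.2.2.2 ν ρ := by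
  simp only [Dt, pdX, pdPsi, pd1, (hasFDerivAt_comp_jetProj (hg (jetProj n z))).fderiv]
  simp [dX1var, pdX1, pdPsi1, pd11, mul_comm]

theorem sum_sum_mul_symE (B : Fin n → Fin n → ℝ) (μ ν : Fin n) :
    ∑ ρ, ∑ σ, B ρ σ * symE μ ν ρ σ = (B μ ν + B ν μ) / 2 := by
  simp [symE, mul_add, mul_div_assoc', Finset.sum_add_distrib, ← Finset.sum_div, ite_and]

theorem sum_mul_pd11 (f : J1 n → ℝ) (w : J1 n) (u : Fin n → ℝ) :
    ∑ μ, u μ * pd11 f μ w = fderiv ℝ f w (0, 0, u) := by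
  have hsplit : ((0, 0, u) : J1 n) = ∑ μ, u μ • ((0, 0, Pi.single μ 1) : J1 n) := by
    ext <;> simp [Prod.fst_sum, Prod.snd_sum, Finset.sum_apply, Pi.single_apply]
  simp only [hsplit, map_sum, map_smul, smul_eq_mul, pd11]

theorem euler_pd11_iff_homogeneous {f : J1 n → ℝ} (hf : Differentiable ℝ f) (c : ℝ) :
    (∀ w : J1 n, ∑ μ, w.2.2 μ * pd11 f μ w = c * f w) ↔
      ∀ x ψ pv (lam : ℝ), 0 < lam → f (x, ψ, lam • pv) = lam ^ c * f (x, ψ, pv) := by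
  have hslice (x : Fin n → ℝ) (ψ : ℝ) (pv : Fin n → ℝ) :
      fderiv ℝ (fun v => f (x, ψ, v)) pv pv = ∑ μ, pv μ * pd11 f μ (x, ψ, pv) := by
    have hincl := (hasFDerivAt_prodMk_right x (ψ, pv)).comp pv
      (hasFDerivAt_prodMk_right (𝕜 := ℝ) ψ pv)
    have hD : HasFDerivAt (fun v => f (x, ψ, v)) _ pv := (hf _).hasFDerivAt.comp pv hincl
    rw [hD.fderiv, sum_mul_pd11]
    rfl
  simp only [Prod.forall]
  refine forall_congr' fun x => forall_congr' fun ψ => ?_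
  simpa only [hslice] using
    (homogeneous_iff_euler (g := fun v => f (x, ψ, v)) (by fun_prop) c).symm

theorem forall_affine_eq_iff {ι κ : Type*} [Fintype ι] [Fintype κ] {a a' : ℝ}
    {b b' : ι → κ → ℝ} :
    (∀ q : ι → κ → ℝ, a + ∑ i, ∑ j, b i j * q i j = a' + ∑ i, ∑ j, b' i j * q i j) ↔
      a = a' ∧ ∀ i j, b i j = b' i j := by
  classical
  refine ⟨fun h => ?_, fun ⟨ha, hb⟩ q => by simp only [ha, hb]⟩
  have ha : a = a' := by simpa using h 0
  refine ⟨ha, fun i j => ?_⟩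
  simpa [ha, ite_and] using h fun i' j' => if i' = i ∧ j' = j then 1 else 0

theorem forall_affine_eq_zero_iff {ι κ : Type*} [Fintype ι] [Fintype κ] {a : ℝ}
    {b : ι → κ → ℝ} :
    (∀ q : ι → κ → ℝ, a + ∑ i, ∑ j, b i j * q i j = 0) ↔ a = 0 ∧ ∀ i j, b i j = 0 := by
  simpa using forall_affine_eq_iff (a' := 0) (b := b) (b' := 0)

theorem forall_J2_iff {P : J2 n → Prop} :
    (∀ z, P z) ↔ ∀ (w : J1 n) (q : Fin n → Fin n → ℝ), P (w.1, w.2.1, w.2.2, q) :=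
  ⟨fun h _ _ => h _, fun h z => h (jetProj n z) z.2.2.2⟩

section Quasilinear

variable {T0 : J1 n → ℝ} {Tq : Fin n → Fin n → J1 n → ℝ}
  (h0 : Differentiable ℝ T0) (hq : ∀ ρ σ, Differentiable ℝ (Tq ρ σ))
  (hsym : ∀ ρ σ, Tq ρ σ = Tq σ ρ)

include h0 hq

theorem pdPsi_quasilinear (z : J2 n) : pdPsi (quasilinear T0 Tq) z =
    pdPsi1 T0 (jetProj n z) + ∑ ρ, ∑ σ, pdPsi1 (Tq ρ σ) (jetProj n z) * z.2.2.2 ρ σ := by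
  simp [pdPsi, pdPsi1, fderiv_quasilinear h0 hq]

theorem pd1_quasilinear (μ : Fin n) (z : J2 n) : pd1 (quasilinear T0 Tq) μ z =
    pd11 T0 μ (jetProj n z) + ∑ ρ, ∑ σ, pd11 (Tq ρ σ) μ (jetProj n z) * z.2.2.2 ρ σ := by
  simp [pd1, pd11, fderiv_quasilinear h0 hq]

include hsym in
theorem pd2_quasilinear (μ ν : Fin n) :
    pd2 (quasilinear T0 Tq) μ ν = fun z => Tq μ ν (jetProj n z) := by
  funext z
  have hv : jetProj n ((0, 0, 0, symE μ ν) : J2 n) = 0 := rfl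
  simp only [pd2, fderiv_quasilinear h0 hq, hv, map_zero, zero_mul, zero_add,
    sum_sum_mul_symE (fun ρ σ => Tq ρ σ (jetProj n z)), hsym ν μ, add_self_div_two]

theorem forall_pdPsi_quasilinear_eq_zero_iff :
    (∀ z, pdPsi (quasilinear T0 Tq) z = 0) ↔
      (∀ w, pdPsi1 T0 w = 0) ∧ ∀ ρ σ w, pdPsi1 (Tq ρ σ) w = 0 := by
  simp only [forall_J2_iff, pdPsi_quasilinear h0 hq, jetProj_apply, forall_affine_eq_zero_iff,
    forall_and]
  exact and_congr_right' ⟨fun h ρ σ w => h w ρ σ, fun h w ρ σ => h ρ σ w⟩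

include hsym

theorem ADKsecond_quasilinear_iff :
    ADKsecond (quasilinear T0 Tq) ↔
      (∀ μ w, pd11 T0 μ w = ∑ ν, dX1var (Tq μ ν) ν w) ∧
        ∀ ρ σ μ w, pd11 (Tq ρ σ) μ w = pd11 (Tq μ ρ) σ w := by
  have hDt (μ : Fin n) (w : J1 n) (q : Fin n → Fin n → ℝ) :
      ∑ ν, Dt ν (pd2 (quasilinear T0 Tq) μ ν) (w.1, w.2.1, w.2.2, q) =
        ∑ ν, dX1var (Tq μ ν) ν w + ∑ ρ, ∑ σ, pd11 (Tq μ ρ) σ w * q ρ σ := by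
    simp only [pd2_quasilinear h0 hq hsym, Dt_comp_jetProj, hq]
    simp only [jetProj_apply, Finset.sum_add_distrib]
  simp only [ADKsecond, forall_J2_iff, hDt, pd1_quasilinear h0 hq,
    jetProj_apply, forall_affine_eq_iff, forall_and]
  exact and_congr_right' ⟨fun h ρ σ μ w => h μ w ρ σ, fun h μ w ρ σ => h ρ σ μ w⟩

theorem euler_quasilinear_iff (p : ℝ) :
    (∀ z : J2 n, (∑ μ, z.2.2.1 μ * pd1 (quasilinear T0 Tq) μ z) +
        (∑ μ, ∑ ν, z.2.2.2 μ ν * pd2 (quasilinear T0 Tq) μ ν z) =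
          (p - 1) * quasilinear T0 Tq z) ↔
      (∀ w : J1 n, ∑ μ, w.2.2 μ * pd11 T0 μ w = (p - 1) * T0 w) ∧
        ∀ ρ σ w, ∑ μ, w.2.2 μ * pd11 (Tq ρ σ) μ w = (p - 2) * Tq ρ σ w := by
  have hlhs (w : J1 n) (q : Fin n → Fin n → ℝ) :
      (∑ μ, w.2.2 μ * pd1 (quasilinear T0 Tq) μ (w.1, w.2.1, w.2.2, q)) +
        (∑ μ, ∑ ν, q μ ν * pd2 (quasilinear T0 Tq) μ ν (w.1, w.2.1, w.2.2, q)) =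
      ∑ μ, w.2.2 μ * pd11 T0 μ w +
        ∑ ρ, ∑ σ, (∑ μ, w.2.2 μ * pd11 (Tq ρ σ) μ w + Tq ρ σ w) * q ρ σ := by
    simp only [pd1_quasilinear h0 hq, pd2_quasilinear h0 hq hsym, jetProj_apply, mul_add,
      add_mul, Finset.sum_add_distrib, Finset.mul_sum, Finset.sum_mul]
    rw [add_assoc]
    congr 2
    · rw [Finset.sum_comm]
      exact Finset.sum_congr rfl fun _ _ => Finset.sum_comm.trans
        (Finset.sum_congr rfl fun _ _ => Finset.sum_congr rfl fun _ _ => by ring)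
    · exact Finset.sum_congr rfl fun _ _ => Finset.sum_congr rfl fun _ _ => mul_comm _ _
  have hrhs (w : J1 n) (q : Fin n → Fin n → ℝ) :
      (p - 1) * quasilinear T0 Tq (w.1, w.2.1, w.2.2, q) =
        (p - 1) * T0 w + ∑ ρ, ∑ σ, ((p - 1) * Tq ρ σ w) * q ρ σ := by
    simp only [quasilinear, jetProj_apply, mul_add, Finset.mul_sum, mul_assoc]
  simp only [forall_J2_iff, hlhs, hrhs, forall_affine_eq_iff, forall_and]
  refine and_congr_right' ⟨fun h ρ σ w => ?_, fun h w ρ σ => ?_⟩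
  · linarith [h w ρ σ]
  · linarith [h ρ σ w]

theorem forall_pd2_quasilinear_contract_eq_zero_iff :
    (∀ z : J2 n, ∑ μ, ∑ ν, z.2.2.1 μ * z.2.2.1 ν * pd2 (quasilinear T0 Tq) μ ν z = 0) ↔
      ∀ w : J1 n, ∑ ρ, ∑ σ, w.2.2 ρ * w.2.2 σ * Tq ρ σ w = 0 := by
  simp only [pd2_quasilinear h0 hq hsym, forall_J2_iff, jetProj_apply, forall_const]

end Quasilinear

theorem forall_pd11_rotate_iff_swap {Tq : Fin n → Fin n → J1 n → ℝ}
    (hsym : ∀ ρ σ, Tq ρ σ = Tq σ ρ) :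
    (∀ ρ σ μ w, pd11 (Tq ρ σ) μ w = pd11 (Tq μ ρ) σ w) ↔
      ∀ ρ μ ν w, pd11 (Tq μ ν) ρ w - pd11 (Tq ρ ν) μ w = 0 := by
  constructor
  · intro h ρ μ ν w
    rw [sub_eq_zero, hsym μ ν, h]
  · intro h ρ σ μ w
    rw [hsym ρ σ]
    exact sub_eq_zero.mp (h μ σ ρ w)

theorem dX1var_eq_pdX1 {f : J1 n → ℝ} (hf : ∀ w, pdPsi1 f w = 0) (μ : Fin n) (w : J1 n) :
    dX1var f μ w = pdX1 f μ w := by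
  simp [dX1var, hf]

end JetCalculus

theorem first_order_universal_invariance {n : ℕ} (T0 : J1 n → ℝ)
    (Tq : Fin n → Fin n → J1 n → ℝ)
    (h0 : ContDiff ℝ (⊤ : ℕ∞) T0) (hq : ∀ ρ σ, ContDiff ℝ (⊤ : ℕ∞) (Tq ρ σ))
    (hqsym : ∀ ρ σ, Tq ρ σ = Tq σ ρ) (p : ℝ) (T : J2 n → ℝ)
    (hTdef : ∀ x ψ pv q, T (x, ψ, pv, q) =
      T0 (x, ψ, pv) + ∑ ρ, ∑ σ, Tq ρ σ (x, ψ, pv) * q ρ σ) :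
    (ADKsecond T ∧ (∀ z : J2 n, pdPsi T z = 0) ∧
      (∀ z : J2 n,
        (∑ μ, z.2.2.1 μ * pd1 T μ z) + (∑ μ, ∑ ν, z.2.2.2 μ ν * pd2 T μ ν z) =
          (p - 1) * T z) ∧
      (∀ z : J2 n, (∑ μ, ∑ ν, z.2.2.1 μ * z.2.2.1 ν * pd2 T μ ν z) = 0)) ↔
    ((∀ w, pdPsi1 T0 w = 0) ∧
      (∀ ρ σ w, pdPsi1 (Tq ρ σ) w = 0) ∧
      (∀ (x : Fin n → ℝ) (ψ : ℝ) (pv : Fin n → ℝ) (lam : ℝ), 0 < lam →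
        T0 (x, ψ, lam • pv) = Real.rpow lam (p - 1) * T0 (x, ψ, pv)) ∧
      (∀ (ρ σ : Fin n) (x : Fin n → ℝ) (ψ : ℝ) (pv : Fin n → ℝ) (lam : ℝ), 0 < lam →
        Tq ρ σ (x, ψ, lam • pv) = Real.rpow lam (p - 2) * Tq ρ σ (x, ψ, pv)) ∧
      (∀ w : J1 n, (∑ ρ, ∑ σ, w.2.2 ρ * w.2.2 σ * Tq ρ σ w) = 0) ∧
      (∀ (ρ μ ν : Fin n) (w : J1 n), pd11 (Tq μ ν) ρ w - pd11 (Tq ρ ν) μ w = 0) ∧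
      (∀ (ρ : Fin n) (w : J1 n), pd11 T0 ρ w = ∑ σ, pdX1 (Tq ρ σ) σ w)) := by
  obtain rfl : T = quasilinear T0 Tq := funext fun z => hTdef z.1 z.2.1 z.2.2.1 z.2.2.2
  have h0' : Differentiable ℝ T0 := h0.differentiable (by simp)
  have hq' (ρ σ : Fin n) : Differentiable ℝ (Tq ρ σ) := (hq ρ σ).differentiable (by simp)
  rw [ADKsecond_quasilinear_iff h0' hq' hqsym, forall_pdPsi_quasilinear_eq_zero_iff h0' hq',
    euler_quasilinear_iff h0' hq' hqsym, forall_pd2_quasilinear_contract_eq_zero_iff h0' hq' hqsym,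
    forall_pd11_rotate_iff_swap hqsym]
  simp only [euler_pd11_iff_homogeneous, h0', hq', Real.rpow_eq_pow]
  constructor
  · rintro ⟨⟨hconst, hexchange⟩, ⟨hpsi0, hpsiq⟩, ⟨hhom0, hhomq⟩, hnull⟩
    exact ⟨hpsi0, hpsiq, hhom0, hhomq, hnull, hexchange,
      fun ρ w => by simpa only [dX1var_eq_pdX1 (hpsiq ρ _)] using hconst ρ w⟩
  · rintro ⟨hpsi0, hpsiq, hhom0, hhomq, hnull, hexchange, hconst⟩
    exact ⟨⟨fun μ w => by simpa only [dX1var_eq_pdX1 (hpsiq μ _)] using hconst μ w, hexchange⟩,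
      ⟨hpsi0, hpsiq⟩, ⟨hhom0, hhomq⟩, hnull⟩

end
end
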